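/- arXiv:1705.10352 — 7 statements merged into one kernel-verified Lean document; each statement's English description precedes it below -/
import Mathlib

section
/- Let R > 0 and Λ > 0, and let Φ be a radial steady state with parameters (R, Λ). Then Φ(r) > 0 for every r ∈ [0, R). -/
/-!
Suppose `Φ ≤ 0` somewhere in `[0, R)`. Since `Φ(R) = 0`, `Φ` then attains its minimum over
`[0, R]` at some `s < R`, and `Φ(s) ≤ 0 < Λ e^{Φ(s)}`. By continuity the radial Laplacian
`Φ'' + Φ'/r = Φ - Λ e^Φ` is negative on some interval `(s, t)`, so the flux `r Φ'(r)` decreases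
there from its value `0` at `s`; hence `Φ' < 0` on `(s, t)`, and `Φ(t) < Φ(s)` contradicts
minimality.
-/

/-- `Φ` is a radial steady state with parameters `(R, Λ)`: it is twice continuously
differentiable on `[0, R]`, satisfies `-Φ''(r) - Φ'(r)/r + Φ(r) = Λ exp(Φ(r))` on `(0, R)`,
and `Φ'(0) = 0`, `Φ(R) = 0`. -/
def IsRadialSteadyState (R Λ : ℝ) (Φ : ℝ → ℝ) : Prop :=
  ContDiffOn ℝ 2 Φ (Set.Icc 0 R) ∧
  (∀ r ∈ Set.Ioo 0 R,
    -(deriv (deriv Φ) r) - deriv Φ r / r + Φ r = Λ * Real.exp (Φ r)) ∧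
  deriv Φ 0 = 0 ∧ Φ R = 0

open Set Filter Topology

theorem ContinuousOn.exists_isMinOn_Ico {f : ℝ → ℝ} {a b c : ℝ} (hf : ContinuousOn f (Icc a b))
    (hc : c ∈ Ico a b) (hcb : f c ≤ f b) : ∃ s ∈ Ico a b, IsMinOn f (Icc a b) s := by
  obtain ⟨m, hm, hmin⟩ :=
    isCompact_Icc.exists_isMinOn (nonempty_Icc.mpr (hc.1.trans hc.2.le)) hf
  rcases hm.2.lt_or_eq with hmb | rfl
  · exact ⟨m, ⟨hm.1, hmb⟩, hmin⟩
  · exact ⟨c, hc, fun x hx => hcb.trans (hmin hx)⟩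

theorem strictAntiOn_of_radial_laplacian_neg {Φ : ℝ → ℝ} {s t : ℝ} (hs : 0 ≤ s) (hst : s < t)
    (hΦ : ContDiffOn ℝ 2 Φ (Icc s t)) (hflux : s * derivWithin Φ (Icc s t) s ≤ 0)
    (hneg : ∀ r ∈ Ioo s t, deriv (deriv Φ) r + deriv Φ r / r < 0) :
    StrictAntiOn Φ (Icc s t) := by
  set g := derivWithin Φ (Icc s t)
  have hg : ContinuousOn g (Icc s t) :=
    (hΦ.derivWithin (uniqueDiffOn_Icc hst) (by norm_num) : ContDiffOn ℝ 1 g _).continuousOn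
  have hg_eq : ∀ r ∈ Ioo s t, g r = deriv Φ r := fun r hr =>
    derivWithin_of_mem_nhds (Icc_mem_nhds hr.1 hr.2)
  have hΦ' : ContDiffOn ℝ 1 (deriv Φ) (Ioo s t) :=
    (hΦ.mono Ioo_subset_Icc_self).deriv_of_isOpen isOpen_Ioo (by norm_num)
  have hflux_deriv : ∀ r ∈ Ioo s t, deriv (fun r => r * g r) r < 0 := by
    intro r hr
    have hr0 : r ≠ 0 := (hs.trans_lt hr.1).ne'
    have hd : HasDerivAt (fun r => r * deriv Φ r) (r * (deriv (deriv Φ) r + deriv Φ r / r)) r := by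
      refine ((hasDerivAt_id r).mul ((hΦ'.differentiableOn one_ne_zero r hr).differentiableAt
        (isOpen_Ioo.mem_nhds hr)).hasDerivAt).congr_deriv ?_
      simp only [id, one_mul]
      field_simp
      ring
    have hgr : (fun r => r * g r) =ᶠ[𝓝 r] fun r => r * deriv Φ r := by
      filter_upwards [isOpen_Ioo.mem_nhds hr] with x hx using by rw [hg_eq x hx]
    rw [(hd.congr_of_eventuallyEq hgr).deriv]
    exact mul_neg_of_pos_of_neg (hs.trans_lt hr.1) (hneg r hr)
  have hflux_anti : StrictAntiOn (fun r => r * g r) (Icc s t) :=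
    strictAntiOn_of_deriv_neg (convex_Icc s t) (continuousOn_id.mul hg)
      (by rwa [interior_Icc])
  refine strictAntiOn_of_deriv_neg (convex_Icc s t) hΦ.continuousOn fun r hr => ?_
  rw [interior_Icc] at hr
  have hlt : r * g r < s * g s :=
    hflux_anti (left_mem_Icc.mpr hst.le) (Ioo_subset_Icc_self hr) hr.1
  rw [← hg_eq r hr]
  exact neg_of_mul_neg_right (hlt.trans_le hflux) (hs.trans hr.1.le)

theorem not_isMinOn_of_radial_laplacian_neg {Φ : ℝ → ℝ} {R s : ℝ}
    (hΦ : ContDiffOn ℝ 2 Φ (Icc 0 R)) (hs : s ∈ Ico 0 R)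
    (hneg : ∀ᶠ r in 𝓝[>] s, deriv (deriv Φ) r + deriv Φ r / r < 0) :
    ¬ IsMinOn Φ (Icc 0 R) s := by
  intro hmin
  obtain ⟨u, hsu, hu⟩ := mem_nhdsGT_iff_exists_Ioo_subset.mp (hneg.and (Ioo_mem_nhdsGT hs.2))
  set t := min u R
  have hst : s < t := lt_min hsu hs.2
  have hsub : Icc s t ⊆ Icc 0 R := Icc_subset_Icc hs.1 (min_le_right u R)
  have hflux : s * derivWithin Φ (Icc s t) s = 0 := by
    rcases hs.1.eq_or_lt with rfl | hs0
    · exact zero_mul _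
    have hmem : Icc 0 R ∈ 𝓝 s := Icc_mem_nhds hs0 hs.2
    rw [((hΦ.differentiableOn two_ne_zero s (Ico_subset_Icc_self hs)).differentiableAt
      hmem).derivWithin (uniqueDiffOn_Icc hst s (left_mem_Icc.mpr hst.le)),
      (hmin.isLocalMin hmem).deriv_eq_zero, mul_zero]
  have hanti := strictAntiOn_of_radial_laplacian_neg hs.1 hst (hΦ.mono hsub) hflux.le
    fun r hr => (hu ⟨hr.1, hr.2.trans_le (min_le_left u R)⟩).1
  exact (hanti (left_mem_Icc.mpr hst.le) (right_mem_Icc.mpr hst.le) hst).not_ge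
    (hmin (hsub (right_mem_Icc.mpr hst.le)))

theorem positivity_of_radial_steady_state_general
    (R Λ : ℝ) (hΛ : 0 < Λ) (Φ : ℝ → ℝ)
    (hΦ : IsRadialSteadyState R Λ Φ) :
    ∀ r ∈ Set.Ico (0:ℝ) R, 0 < Φ r := by
  obtain ⟨hC2, hODE, -, hΦR⟩ := hΦ
  intro r₀ hr₀
  by_contra! hr₀_nonpos
  obtain ⟨s, hs, hmin⟩ := hC2.continuousOn.exists_isMinOn_Ico hr₀ (by rwa [hΦR])
  refine not_isMinOn_of_radial_laplacian_neg hC2 hs ?_ hmin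
  have hΦs : Φ s < Λ * Real.exp (Φ s) :=
    ((hmin (Ico_subset_Icc_self hr₀)).trans hr₀_nonpos).trans_lt (by positivity)
  have hcont : ContinuousWithinAt (fun r => Λ * Real.exp (Φ r) - Φ r) (Ioi s) s :=
    ((continuousOn_const.mul hC2.continuousOn.rexp).sub hC2.continuousOn).continuousWithinAt
      (Ico_subset_Icc_self hs) |>.mono_of_mem_nhdsWithin
      (mem_of_superset (Ioo_mem_nhdsGT hs.2) (Ioo_subset_Icc_self.trans (Icc_subset_Icc_left hs.1)))
  filter_upwards [hcont.eventually (eventually_gt_nhds (sub_pos.mpr hΦs)),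
    Ioo_mem_nhdsGT hs.2] with r hr hrR
  linarith [hODE r ⟨hs.1.trans_lt hrR.1, hrR.2⟩]

theorem positivity_of_radial_steady_state
    (R Λ : ℝ) (hR : 0 < R) (hΛ : 0 < Λ) (Φ : ℝ → ℝ)
    (hΦ : IsRadialSteadyState R Λ Φ) :
    ∀ r ∈ Set.Ico (0:ℝ) R, 0 < Φ r :=
  positivity_of_radial_steady_state_general R Λ hΛ Φ hΦ
end

section
/- Let R > 0 and Λ ≥ 0, and let Φ be a radial steady state with parameters (R, Λ). If Λ·∫₀^R exp(Φ(r))·r dr ≥ 4 and R·Φ'(R) + (1/2)·(R·Φ'(R))² + ∫₀^R Φ(r)²·r dr < 0, then R > 4. -/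
/-!
Integrating the equation against `r dr` gives the flux identity
`R Φ'(R) = ∫₀^R Φ r dr - M` with `M = Λ ∫₀^R e^Φ r dr ≥ 4`, and Cauchy–Schwarz with weight `r`
gives `(∫₀^R Φ r dr)² ≤ (R²/2) ∫₀^R Φ² r dr`. If `R ≤ 4`, the left side of the second hypothesis
is therefore at least a quadratic in `∫₀^R Φ r dr` whose minimum `(M² - 2M - 4)/10` is positive.
-/

open Set Real MeasureTheory

theorem sq_intervalIntegral_mul_le {f w : ℝ → ℝ} {a b : ℝ} (hab : a ≤ b)
    (hw : ∀ x ∈ Icc a b, 0 ≤ w x) (hw_int : IntervalIntegrable w volume a b)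
    (hfw : IntervalIntegrable (fun x => f x * w x) volume a b)
    (hffw : IntervalIntegrable (fun x => f x ^ 2 * w x) volume a b) :
    (∫ x in a..b, f x * w x) ^ 2 ≤ (∫ x in a..b, w x) * ∫ x in a..b, f x ^ 2 * w x := by
  have hquad : ∀ t : ℝ, 0 ≤ (∫ x in a..b, w x) * (t * t) + (-2 * ∫ x in a..b, f x * w x) * t
      + ∫ x in a..b, f x ^ 2 * w x := by
    intro t
    have hexpand : ∫ x in a..b, (f x - t) ^ 2 * w x = (∫ x in a..b, w x) * (t * t)
        + (-2 * ∫ x in a..b, f x * w x) * t + ∫ x in a..b, f x ^ 2 * w x := by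
      have hpoint : (fun x => (f x - t) ^ 2 * w x)
          = fun x => (t * t) * w x + (-2 * t) * (f x * w x) + f x ^ 2 * w x := by
        ext x; ring
      rw [hpoint, intervalIntegral.integral_add ((hw_int.const_mul _).add (hfw.const_mul _)) hffw,
        intervalIntegral.integral_add (hw_int.const_mul _) (hfw.const_mul _),
        intervalIntegral.integral_const_mul, intervalIntegral.integral_const_mul]
      ring
    rw [← hexpand]
    exact intervalIntegral.integral_nonneg hab fun x hx => mul_nonneg (sq_nonneg _) (hw x hx)
  have := discrim_le_zero hquad
  rw [discrim] at this
  linarith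

namespace IsRadialSteadyState

variable {R Λ : ℝ} {Φ : ℝ → ℝ}

theorem continuousOn_uIcc (hΦ : IsRadialSteadyState R Λ Φ) (hR : 0 ≤ R) :
    ContinuousOn Φ (uIcc 0 R) := by
  rw [uIcc_of_le hR]
  exact hΦ.1.continuousOn

/-- The derivative within `[0, R]` rather than `deriv Φ` makes `r Φ'(r)` continuous up to the
endpoints, where `Φ` need not be differentiable. -/
theorem hasDerivAt_mul_derivWithin (hΦ : IsRadialSteadyState R Λ Φ) {r : ℝ} (hr : r ∈ Ioo 0 R) :
    HasDerivAt (fun x => x * derivWithin Φ (Icc 0 R) x) (Φ r * r - Λ * (exp (Φ r) * r)) r := by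
  set g := derivWithin Φ (Icc 0 R)
  have hIcc : Icc 0 R ∈ nhds r := Icc_mem_nhds hr.1 hr.2
  have hg : ContDiffOn ℝ 1 g (Icc 0 R) :=
    hΦ.1.derivWithin (uniqueDiffOn_Icc (hr.1.trans hr.2)) (by norm_num)
  have hg_diff : DifferentiableAt ℝ g r :=
    (hg.differentiableOn one_ne_zero r (Ioo_subset_Icc_self hr)).differentiableAt hIcc
  have hg_eq : deriv Φ =ᶠ[nhds r] g := by
    filter_upwards [isOpen_Ioo.mem_nhds hr] with x hx
    exact (derivWithin_of_mem_nhds (Icc_mem_nhds hx.1 hx.2)).symm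
  have hode := hΦ.2.1 r hr
  rw [hg_eq.deriv_eq, hg_eq.eq_of_nhds] at hode
  refine ((hasDerivAt_id' r).mul hg_diff.hasDerivAt).congr_deriv ?_
  have hr0 : r ≠ 0 := hr.1.ne'
  rw [← mul_assoc, ← hode]
  field_simp
  ring

theorem mul_deriv_eq_integral_sub (hΦ : IsRadialSteadyState R Λ Φ) (hR : 0 < R)
    (hdiff : DifferentiableAt ℝ Φ R) :
    R * deriv Φ R = (∫ r in 0..R, Φ r * r) - Λ * ∫ r in 0..R, exp (Φ r) * r := by
  have hΦc := hΦ.continuousOn_uIcc hR.le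
  have hflux : ContinuousOn (fun x => x * derivWithin Φ (Icc 0 R) x) (Icc 0 R) :=
    continuousOn_id.mul (hΦ.1.continuousOn_derivWithin (uniqueDiffOn_Icc hR) (by norm_num))
  have hint1 : IntervalIntegrable (fun r => Φ r * r) volume 0 R :=
    (hΦc.mul continuousOn_id).intervalIntegrable
  have hint2 : IntervalIntegrable (fun r => exp (Φ r) * r) volume 0 R :=
    ((continuous_exp.comp_continuousOn hΦc).mul continuousOn_id).intervalIntegrable
  have hftc := intervalIntegral.integral_eq_sub_of_hasDeriv_right_of_le hR.le
    hflux (fun r hr => (hΦ.hasDerivAt_mul_derivWithin hr).hasDerivWithinAt)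
    (hint1.sub (hint2.const_mul Λ))
  rw [intervalIntegral.integral_sub hint1 (hint2.const_mul Λ),
    intervalIntegral.integral_const_mul,
    hdiff.hasDerivAt.hasDerivWithinAt.derivWithin (uniqueDiffOn_Icc hR R ⟨hR.le, le_rfl⟩)] at hftc
  linarith

end IsRadialSteadyState

theorem four_lt_of_quadratic_neg {R I₁ I₂ M : ℝ} (hR : 0 < R) (hM : 4 ≤ M)
    (hCS : I₁ ^ 2 ≤ R ^ 2 / 2 * I₂)
    (h : (I₁ - M) + (1/2) * (I₁ - M) ^ 2 + I₂ < 0) : 4 < R := by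
  by_contra! hR4
  have hI₂ : 0 ≤ I₂ :=
    nonneg_of_mul_nonneg_right ((sq_nonneg I₁).trans hCS) (by positivity)
  have hI₂_ge : I₁ ^ 2 ≤ 8 * I₂ := by
    nlinarith [mul_le_mul_of_nonneg_right (pow_le_pow_left₀ hR.le hR4 2) hI₂]
  -- `x + x²/2 + y²/8 = (5/8)(y - 4(M-1)/5)² + (M² - 2M - 4)/10` for `x = y - M`
  nlinarith [sq_nonneg (5 * I₁ - 4 * M + 4), mul_nonneg (sub_nonneg.2 hM) (by linarith : 0 ≤ M + 2)]

theorem radius_lower_bound_general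
    (R Λ : ℝ) (hR : 0 < R) (Φ : ℝ → ℝ)
    (hΦ : IsRadialSteadyState R Λ Φ)
    (h1 : 4 ≤ Λ * ∫ r in (0:ℝ)..R, Real.exp (Φ r) * r)
    (h2 : R * deriv Φ R + (1/2) * (R * deriv Φ R)^2
        + (∫ r in (0:ℝ)..R, (Φ r)^2 * r) < 0) :
    4 < R := by
  have hΦc := hΦ.continuousOn_uIcc hR.le
  have hCS := sq_intervalIntegral_mul_le hR.le (fun x hx => hx.1)
    (continuous_id.intervalIntegrable 0 R) (hΦc.mul continuousOn_id).intervalIntegrable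
    ((hΦc.pow 2).mul continuousOn_id).intervalIntegrable
  rw [integral_id] at hCS
  by_cases hdiff : DifferentiableAt ℝ Φ R
  · rw [hΦ.mul_deriv_eq_integral_sub hR hdiff] at h2
    exact four_lt_of_quadratic_neg hR h1 (by simpa using hCS) h2
  · rw [deriv_zero_of_not_differentiableAt hdiff] at h2
    have : 0 ≤ ∫ r in (0:ℝ)..R, (Φ r)^2 * r :=
      intervalIntegral.integral_nonneg hR.le fun r hr => mul_nonneg (sq_nonneg _) hr.1
    simp only [mul_zero, ne_eq, OfNat.ofNat_ne_zero, not_false_eq_true, zero_pow, zero_add] at h2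
    linarith

theorem radius_lower_bound
    (R Λ : ℝ) (hR : 0 < R) (hΛ : 0 ≤ Λ) (Φ : ℝ → ℝ)
    (hΦ : IsRadialSteadyState R Λ Φ)
    (h1 : 4 ≤ Λ * ∫ r in (0:ℝ)..R, Real.exp (Φ r) * r)
    (h2 : R * deriv Φ R + (1/2) * (R * deriv Φ R)^2
        + (∫ r in (0:ℝ)..R, (Φ r)^2 * r) < 0) :
    4 < R :=
  radius_lower_bound_general R Λ hR Φ hΦ h1 h2
end

section
/- Let R > 0 and Λ ≥ 0, let Φ be a radial steady state with parameters (R, Λ), let n ≥ 1 be an integer and b ∈ ℝ. Suppose h₁ and h₂ are both continuously differentiable on [0, R], twice continuously differentiable on (0, R), and satisfy −h''(r) − h'(r)/r + (n²/r² + 1)·h(r) = Λ·exp(Φ(r))·h(r) for every r ∈ (0, R), with h(0) = 0 and h(R) = b. Then h₁(r) = h₂(r) for every r ∈ [0, R]. -/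
/-!
The difference `w = h₁ - h₂` solves the mode equation with zero boundary values, so it suffices
to show that such a solution is `≤ 0` (and to apply this to `-w` as well).

If `Λ ≤ 0`, the potential `n²/r² + 1 - Λ e^Φ` is positive and the maximum principle applies. If
`Λ > 0`, differentiating the steady-state equation shows that `v = -Φ'` solves the mode equation
for `n = 1`, and `v > 0` on `(0, R]`; a Sturm comparison through the Wronskian `r (v w' - w v')`
then excludes a positive hump of `w`.

That `Φ` is strictly decreasing is an ODE argument based on the flux `r Φ'`, whose derivative is
`r (Φ - Λ e^Φ)`. First `Φ ≥ 0` by the minimum principle. A last critical point `c` of `Φ` would be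
followed by a descent to `Φ(R) = 0`; it can be neither an equilibrium `Φ(c) = Λ e^{Φ(c)}` (by
uniqueness for the initial value problem) nor a strict local maximum, since going back to the
previous critical point would contradict the decay of the energy `Φ'²/2 + Λ e^Φ - Φ²/2`.
-/

open Set Filter Topology Real

/-! ## One-variable calculus -/

section OneVariable

variable {f f' : ℝ → ℝ} {a b x : ℝ}

theorem strictMonoOn_Icc_of_hasDerivAt_pos (hf : ContinuousOn f (Icc a b))
    (hderiv : ∀ y ∈ Ioo a b, HasDerivAt f (f' y) y) (hpos : ∀ y ∈ Ioo a b, 0 < f' y) :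
    StrictMonoOn f (Icc a b) :=
  strictMonoOn_of_hasDerivWithinAt_pos (convex_Icc a b) hf
    (fun y hy => by rw [interior_Icc] at hy ⊢; exact (hderiv y hy).hasDerivWithinAt)
    (fun y hy => hpos y (by rwa [interior_Icc] at hy))

theorem strictAntiOn_Icc_of_hasDerivAt_neg (hf : ContinuousOn f (Icc a b))
    (hderiv : ∀ y ∈ Ioo a b, HasDerivAt f (f' y) y) (hneg : ∀ y ∈ Ioo a b, f' y < 0) :
    StrictAntiOn f (Icc a b) :=
  strictAntiOn_of_hasDerivWithinAt_neg (convex_Icc a b) hf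
    (fun y hy => by rw [interior_Icc] at hy ⊢; exact (hderiv y hy).hasDerivWithinAt)
    (fun y hy => hneg y (by rwa [interior_Icc] at hy))

theorem monotoneOn_Icc_of_hasDerivAt_nonneg (hf : ContinuousOn f (Icc a b))
    (hderiv : ∀ y ∈ Ioo a b, HasDerivAt f (f' y) y) (hnonneg : ∀ y ∈ Ioo a b, 0 ≤ f' y) :
    MonotoneOn f (Icc a b) :=
  monotoneOn_of_hasDerivWithinAt_nonneg (convex_Icc a b) hf
    (fun y hy => by rw [interior_Icc] at hy ⊢; exact (hderiv y hy).hasDerivWithinAt)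
    (fun y hy => hnonneg y (by rwa [interior_Icc] at hy))

theorem antitoneOn_Icc_of_hasDerivAt_nonpos (hf : ContinuousOn f (Icc a b))
    (hderiv : ∀ y ∈ Ioo a b, HasDerivAt f (f' y) y) (hnonpos : ∀ y ∈ Ioo a b, f' y ≤ 0) :
    AntitoneOn f (Icc a b) :=
  antitoneOn_of_hasDerivWithinAt_nonpos (convex_Icc a b) hf
    (fun y hy => by rw [interior_Icc] at hy ⊢; exact (hderiv y hy).hasDerivWithinAt)
    (fun y hy => hnonpos y (by rwa [interior_Icc] at hy))

theorem eventually_lt_nhdsGT_of_deriv_pos (hxb : x < b) (hf : ContinuousOn f (Icc x b))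
    (hderiv : ∀ y ∈ Ioo x b, HasDerivAt f (f' y) y) (hpos : ∀ᶠ y in 𝓝[>] x, 0 < f' y) :
    ∀ᶠ y in 𝓝[>] x, f x < f y := by
  obtain ⟨c, hxc, hc⟩ := (nhdsGT_basis x).eventually_iff.mp (hpos.and (Ioo_mem_nhdsGT hxb))
  refine (nhdsGT_basis x).eventually_iff.mpr ⟨c, hxc, fun y hy => ?_⟩
  have hyb : y < b := (hc hy).2.2
  exact strictMonoOn_Icc_of_hasDerivAt_pos (hf.mono (Icc_subset_Icc_right hyb.le))
    (fun z hz => hderiv z ⟨hz.1, hz.2.trans hyb⟩) (fun z hz => (hc ⟨hz.1, hz.2.trans hy.2⟩).1)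
    (left_mem_Icc.mpr hy.1.le) (right_mem_Icc.mpr hy.1.le) hy.1

theorem eventually_lt_nhdsLT_of_deriv_pos (hax : a < x) (hf : ContinuousOn f (Icc a x))
    (hderiv : ∀ y ∈ Ioo a x, HasDerivAt f (f' y) y) (hpos : ∀ᶠ y in 𝓝[<] x, 0 < f' y) :
    ∀ᶠ y in 𝓝[<] x, f y < f x := by
  obtain ⟨c, hcx, hc⟩ := (nhdsLT_basis x).eventually_iff.mp (hpos.and (Ioo_mem_nhdsLT hax))
  refine (nhdsLT_basis x).eventually_iff.mpr ⟨c, hcx, fun y hy => ?_⟩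
  have hay : a < y := (hc hy).2.1
  exact strictMonoOn_Icc_of_hasDerivAt_pos (hf.mono (Icc_subset_Icc_left hay.le))
    (fun z hz => hderiv z ⟨hay.trans hz.1, hz.2⟩) (fun z hz => (hc ⟨hy.1.trans hz.1, hz.2⟩).1)
    (left_mem_Icc.mpr hy.2.le) (right_mem_Icc.mpr hy.2.le) hy.2

theorem eventually_gt_nhdsGT_of_deriv_neg (hxb : x < b) (hf : ContinuousOn f (Icc x b))
    (hderiv : ∀ y ∈ Ioo x b, HasDerivAt f (f' y) y) (hneg : ∀ᶠ y in 𝓝[>] x, f' y < 0) :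
    ∀ᶠ y in 𝓝[>] x, f y < f x :=
  (eventually_lt_nhdsGT_of_deriv_pos hxb hf.neg (fun y hy => (hderiv y hy).neg)
    (hneg.mono fun _ hy => neg_pos.mpr hy)).mono fun _ hy => neg_lt_neg_iff.mp hy

theorem eventually_gt_nhdsLT_of_deriv_neg (hax : a < x) (hf : ContinuousOn f (Icc a x))
    (hderiv : ∀ y ∈ Ioo a x, HasDerivAt f (f' y) y) (hneg : ∀ᶠ y in 𝓝[<] x, f' y < 0) :
    ∀ᶠ y in 𝓝[<] x, f x < f y :=
  (eventually_lt_nhdsLT_of_deriv_pos hax hf.neg (fun y hy => (hderiv y hy).neg)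
    (hneg.mono fun _ hy => neg_pos.mpr hy)).mono fun _ hy => neg_lt_neg_iff.mp hy

theorem nonneg_of_forall_le_of_continuousOn_deriv (hxb : x < b) (hf : ContinuousOn f (Icc x b))
    (hf' : ContinuousOn f' (Icc x b)) (hderiv : ∀ y ∈ Ioo x b, HasDerivAt f (f' y) y)
    (hle : ∀ y ∈ Ioo x b, f x ≤ f y) : 0 ≤ f' x := by
  by_contra! hneg
  have hcont : Tendsto f' (𝓝[>] x) (𝓝 (f' x)) :=
    (hf' x (left_mem_Icc.mpr hxb.le)).mono_of_mem_nhdsWithin (Icc_mem_nhdsGT hxb)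
  obtain ⟨y, hlt, hy⟩ := ((eventually_gt_nhdsGT_of_deriv_neg hxb hf hderiv
    (hcont.eventually (gt_mem_nhds hneg))).and (Ioo_mem_nhdsGT hxb)).exists
  exact (hle y hy).not_gt hlt

theorem nonpos_of_forall_le_of_continuousOn_deriv (hax : a < x) (hf : ContinuousOn f (Icc a x))
    (hf' : ContinuousOn f' (Icc a x)) (hderiv : ∀ y ∈ Ioo a x, HasDerivAt f (f' y) y)
    (hle : ∀ y ∈ Ioo a x, f x ≤ f y) : f' x ≤ 0 := by
  by_contra! hpos
  have hcont : Tendsto f' (𝓝[<] x) (𝓝 (f' x)) :=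
    (hf' x (right_mem_Icc.mpr hax.le)).mono_of_mem_nhdsWithin (Icc_mem_nhdsLT hax)
  obtain ⟨y, hlt, hy⟩ := ((eventually_lt_nhdsLT_of_deriv_pos hax hf hderiv
    (hcont.eventually (lt_mem_nhds hpos))).and (Ioo_mem_nhdsLT hax)).exists
  exact (hle y hy).not_gt hlt

theorem exists_last_zero_of_continuousOn (hab : a ≤ b) (hf : ContinuousOn f (Icc a b))
    (ha : f a ≤ 0) (hb : 0 < f b) :
    ∃ c ∈ Ico a b, f c = 0 ∧ ∀ y ∈ Ioc c b, 0 < f y := by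
  set S := Icc a b ∩ f ⁻¹' Iic 0
  have hS : IsClosed S := hf.preimage_isClosed_of_isClosed isClosed_Icc isClosed_Iic
  have hSbdd : BddAbove S := ⟨b, fun y hy => hy.1.2⟩
  have hcS : sSup S ∈ S := hS.csSup_mem ⟨a, left_mem_Icc.mpr hab, ha⟩ hSbdd
  have hcb : sSup S < b := hcS.1.2.lt_of_ne fun h => (h ▸ hcS.2 : f b ≤ 0).not_gt hb
  have hafter : ∀ y ∈ Ioc (sSup S) b, 0 < f y := fun y hy => by
    by_contra! hy0
    exact (le_csSup hSbdd ⟨⟨hcS.1.1.trans hy.1.le, hy.2⟩, hy0⟩).not_gt hy.1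
  refine ⟨sSup S, ⟨hcS.1.1, hcb⟩, le_antisymm hcS.2 ?_, hafter⟩
  obtain ⟨z, hz, hz0⟩ := intermediate_value_Icc hcS.1.2
    (hf.mono (Icc_subset_Icc_left hcS.1.1)) ⟨hcS.2, hb.le⟩
  rcases hz.1.eq_or_lt with h | h
  · exact (h ▸ hz0).ge
  · exact absurd hz0 (hafter z ⟨h, hz.2⟩).ne'

theorem exists_first_zero_of_continuousOn (hab : a ≤ b) (hf : ContinuousOn f (Icc a b))
    (ha : 0 < f a) (hb : f b ≤ 0) :
    ∃ c ∈ Ioc a b, f c = 0 ∧ ∀ y ∈ Ico a c, 0 < f y := by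
  set S := Icc a b ∩ f ⁻¹' Iic 0
  have hS : IsClosed S := hf.preimage_isClosed_of_isClosed isClosed_Icc isClosed_Iic
  have hSbdd : BddBelow S := ⟨a, fun y hy => hy.1.1⟩
  have hcS : sInf S ∈ S := hS.csInf_mem ⟨b, right_mem_Icc.mpr hab, hb⟩ hSbdd
  have hac : a < sInf S := hcS.1.1.lt_of_ne fun h => (h ▸ hcS.2 : f a ≤ 0).not_gt ha
  have hbefore : ∀ y ∈ Ico a (sInf S), 0 < f y := fun y hy => by
    by_contra! hy0
    exact (csInf_le hSbdd ⟨⟨hy.1, hy.2.le.trans hcS.1.2⟩, hy0⟩).not_gt hy.2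
  refine ⟨sInf S, ⟨hac, hcS.1.2⟩, le_antisymm hcS.2 ?_, hbefore⟩
  obtain ⟨z, hz, hz0⟩ := intermediate_value_Icc' hcS.1.1
    (hf.mono (Icc_subset_Icc_right hcS.1.2)) ⟨hcS.2, ha.le⟩
  rcases hz.2.eq_or_lt with h | h
  · exact (h ▸ hz0).ge
  · exact absurd hz0 (hbefore z ⟨hz.1, h⟩).ne'

theorem exists_pos_component_of_continuousOn (hf : ContinuousOn f (Icc a b)) (ha : f a ≤ 0)
    (hb : f b ≤ 0) (hx : x ∈ Icc a b) (hfx : 0 < f x) :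
    ∃ c ∈ Ico a x, ∃ d ∈ Ioc x b, f c = 0 ∧ f d = 0 ∧ ∀ y ∈ Ioo c d, 0 < f y := by
  obtain ⟨c, hc, hfc, hposc⟩ :=
    exists_last_zero_of_continuousOn hx.1 (hf.mono (Icc_subset_Icc_right hx.2)) ha hfx
  obtain ⟨d, hd, hfd, hposd⟩ :=
    exists_first_zero_of_continuousOn hx.2 (hf.mono (Icc_subset_Icc_left hx.1)) hfx hb
  exact ⟨c, hc, d, hd, hfc, hfd, fun y hy =>
    (le_or_gt y x).elim (fun h => hposc y ⟨hy.1, h⟩) (fun h => hposd y ⟨h.le, hy.2⟩)⟩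

end OneVariable

section DerivWithinIcc

variable {f : ℝ → ℝ} {a b r : ℝ}

theorem derivWithin_Icc_eventuallyEq_deriv (hr : r ∈ Ioo a b) :
    derivWithin f (Icc a b) =ᶠ[𝓝 r] deriv f :=
  eventually_of_mem (isOpen_Ioo.mem_nhds hr) fun _ hy =>
    derivWithin_of_mem_nhds (Icc_mem_nhds hy.1 hy.2)

theorem hasDerivAt_derivWithin_Icc (hf : ContDiffOn ℝ 1 f (Icc a b)) (hr : r ∈ Ioo a b) :
    HasDerivAt f (derivWithin f (Icc a b) r) r :=
  ((hf.differentiableOn one_ne_zero) r (Ioo_subset_Icc_self hr)).hasDerivWithinAt.hasDerivAt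
    (Icc_mem_nhds hr.1 hr.2)

theorem hasDerivAt_derivWithin_Icc_deriv (hf : ContDiffOn ℝ 2 f (Ioo a b)) (hr : r ∈ Ioo a b) :
    HasDerivAt (derivWithin f (Icc a b)) (deriv (deriv f) r) r := by
  have hderiv : ContDiffOn ℝ 1 (deriv f) (Ioo a b) :=
    hf.deriv_of_isOpen isOpen_Ioo (by norm_num)
  exact ((hderiv.differentiableOn one_ne_zero).differentiableAt (isOpen_Ioo.mem_nhds hr))
    |>.hasDerivAt.congr_of_eventuallyEq (derivWithin_Icc_eventuallyEq_deriv hr)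

end DerivWithinIcc

/-! ## The reaction term `t - Λ e^t` -/

theorem abs_reaction_sub_le {Λ B s t : ℝ} (hs : s ≤ B) (ht : t ≤ B) :
    |(s - Λ * exp s) - (t - Λ * exp t)| ≤ (1 + |Λ| * exp B) * |s - t| := by
  have hderiv : ∀ u ∈ Iic B,
      HasDerivWithinAt (fun u => u - Λ * exp u) (1 - Λ * exp u) (Iic B) u := fun u _ =>
    ((hasDerivAt_id u).sub ((hasDerivAt_exp u).const_mul Λ)).hasDerivWithinAt
  have hbound : ∀ u ∈ Iic B, ‖1 - Λ * exp u‖ ≤ 1 + |Λ| * exp B := fun u hu => by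
    rw [Real.norm_eq_abs]
    calc |1 - Λ * exp u| ≤ |1| + |Λ * exp u| := abs_sub _ _
      _ ≤ 1 + |Λ| * exp B := by
        rw [abs_one, abs_mul, abs_exp]
        gcongr
        exact hu
  simpa only [Real.norm_eq_abs] using
    (convex_Iic B).norm_image_sub_le_of_norm_hasDerivWithin_le hderiv hbound ht hs

theorem lipschitzOnWith_radialField {Λ B c t : ℝ} {K : NNReal} (hc : 0 < c) (hct : c ≤ t)
    (hK : 1 + |Λ| * exp B + 1 / c ≤ K) :
    LipschitzOnWith K (fun y : ℝ × ℝ => (y.2, y.1 - Λ * exp y.1 - y.2 / t)) {y | y.1 ≤ B} := by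
  refine LipschitzOnWith.of_dist_le_mul fun y hy z hz => ?_
  have h1 : |y.1 - z.1| ≤ dist y z := by
    rw [Prod.dist_eq, ← Real.dist_eq]; exact le_max_left _ _
  have h2 : |y.2 - z.2| ≤ dist y z := by
    rw [Prod.dist_eq, ← Real.dist_eq]; exact le_max_right _ _
  have hdiv : |y.2 / t - z.2 / t| ≤ dist y z / c := by
    rw [← sub_div, abs_div, abs_of_pos (hc.trans_le hct)]
    exact div_le_div₀ dist_nonneg h2 hc hct
  refine le_trans ?_ (mul_le_mul_of_nonneg_right hK dist_nonneg)
  change max (dist _ _) (dist _ _) ≤ (1 + |Λ| * exp B + 1 / c) * dist y z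
  dsimp only
  rw [Real.dist_eq, Real.dist_eq, max_le_iff]
  constructor
  · refine h2.trans (le_mul_of_one_le_left dist_nonneg ?_)
    have : 0 ≤ |Λ| * exp B + 1 / c := by positivity
    linarith
  · calc |y.1 - Λ * exp y.1 - y.2 / t - (z.1 - Λ * exp z.1 - z.2 / t)|
        ≤ |(y.1 - Λ * exp y.1) - (z.1 - Λ * exp z.1)| + |y.2 / t - z.2 / t| := by
          rw [show y.1 - Λ * exp y.1 - y.2 / t - (z.1 - Λ * exp z.1 - z.2 / t)
            = ((y.1 - Λ * exp y.1) - (z.1 - Λ * exp z.1)) - (y.2 / t - z.2 / t) by ring]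
          exact abs_sub _ _
      _ ≤ (1 + |Λ| * exp B) * dist y z + dist y z / c :=
          add_le_add ((abs_reaction_sub_le hy hz).trans
            (mul_le_mul_of_nonneg_left h1 (by positivity))) hdiv
      _ = (1 + |Λ| * exp B + 1 / c) * dist y z := by ring

theorem mul_exp_sub_sq_le_of_reaction_nonneg {Λ s t : ℝ} (hΛ : 0 ≤ Λ) (hst : s ≤ t)
    (hs : s - Λ * exp s = 0) (ht : 0 ≤ t - Λ * exp t) :
    Λ * exp t - t ^ 2 / 2 ≤ Λ * exp s - s ^ 2 / 2 := by
  have hconcave : ConcaveOn ℝ univ (fun u => u - Λ * exp u) :=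
    (concaveOn_id convex_univ).sub (convexOn_exp.smul hΛ)
  have hreaction : ∀ u ∈ Ioo s t, 0 ≤ u - Λ * exp u := fun u hu =>
    (le_min hs.ge ht).trans (hconcave.min_le_of_mem_Icc trivial trivial (Ioo_subset_Icc_self hu))
  have hderiv : ∀ u ∈ Ioo s t,
      HasDerivAt (fun u => Λ * exp u - u ^ 2 / 2) (Λ * exp u - u) u := fun u _ =>
    (((hasDerivAt_exp u).const_mul Λ).sub ((hasDerivAt_pow 2 u).div_const 2)).congr_deriv
      (by push_cast; ring)
  exact antitoneOn_Icc_of_hasDerivAt_nonpos (by fun_prop) hderiv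
    (fun u hu => by linarith [hreaction u hu]) (left_mem_Icc.mpr hst) (right_mem_Icc.mpr hst) hst

/-! ## Radial steady states -/

/-- First-order form of the radial steady-state equation. The derivatives `Φ'`, `Φ''` are given
explicitly (one-sided at the endpoints) so that `Φ''` can be required to be continuous on `[0, R]`.
-/
structure IsSteadyStateSolution (R Λ : ℝ) (Φ Φ' Φ'' : ℝ → ℝ) : Prop where
  continuousOn : ContinuousOn Φ (Icc 0 R)
  continuousOn_deriv : ContinuousOn Φ' (Icc 0 R)
  continuousOn_deriv2 : ContinuousOn Φ'' (Icc 0 R)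
  hasDerivAt : ∀ r ∈ Ioo 0 R, HasDerivAt Φ (Φ' r) r
  hasDerivAt_deriv : ∀ r ∈ Ioo 0 R, HasDerivAt Φ' (Φ'' r) r
  ode : ∀ r ∈ Ioo 0 R, Φ'' r = Φ r - Λ * exp (Φ r) - Φ' r / r

theorem IsRadialSteadyState.isSteadyStateSolution {R Λ : ℝ} {Φ : ℝ → ℝ} (hR : 0 < R)
    (hΦ : IsRadialSteadyState R Λ Φ) :
    IsSteadyStateSolution R Λ Φ (derivWithin Φ (Icc 0 R))
      (derivWithin (derivWithin Φ (Icc 0 R)) (Icc 0 R)) := by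
  obtain ⟨hreg, hode, -, -⟩ := hΦ
  have huniq : UniqueDiffOn ℝ (Icc (0 : ℝ) R) := uniqueDiffOn_Icc hR
  have hreg' : ContDiffOn ℝ 1 (derivWithin Φ (Icc 0 R)) (Icc 0 R) :=
    hreg.derivWithin huniq (by norm_num)
  refine ⟨hreg.continuousOn, hreg'.continuousOn, hreg'.continuousOn_derivWithin huniq le_rfl,
    fun r hr => hasDerivAt_derivWithin_Icc (hreg.of_le (by norm_num)) hr,
    fun r hr => hasDerivAt_derivWithin_Icc hreg' hr, fun r hr => ?_⟩
  rw [(hasDerivAt_derivWithin_Icc hreg' hr).unique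
      (hasDerivAt_derivWithin_Icc_deriv (hreg.mono Ioo_subset_Icc_self) hr),
    derivWithin_of_mem_nhds (Icc_mem_nhds hr.1 hr.2)]
  linarith [hode r hr]

noncomputable def radialEnergy (Λ : ℝ) (Φ Φ' : ℝ → ℝ) (r : ℝ) : ℝ :=
  Φ' r ^ 2 / 2 + Λ * exp (Φ r) - Φ r ^ 2 / 2

namespace IsSteadyStateSolution

variable {R Λ : ℝ} {Φ Φ' Φ'' : ℝ → ℝ} {a b c x : ℝ}

theorem continuousOn_reaction (hΦ : IsSteadyStateSolution R Λ Φ Φ' Φ'') :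
    ContinuousOn (fun r => Φ r - Λ * exp (Φ r)) (Icc 0 R) :=
  hΦ.continuousOn.sub (continuousOn_const.mul hΦ.continuousOn.rexp)

theorem continuousOn_flux (hΦ : IsSteadyStateSolution R Λ Φ Φ' Φ'') :
    ContinuousOn (fun s => s * Φ' s) (Icc 0 R) :=
  continuousOn_id.mul hΦ.continuousOn_deriv

theorem hasDerivAt_flux (hΦ : IsSteadyStateSolution R Λ Φ Φ' Φ'') {r : ℝ} (hr : r ∈ Ioo 0 R) :
    HasDerivAt (fun s => s * Φ' s) (r * (Φ r - Λ * exp (Φ r))) r := by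
  refine ((hasDerivAt_id r).mul (hΦ.hasDerivAt_deriv r hr)).congr_deriv ?_
  rw [hΦ.ode r hr, id]
  field_simp [hr.1.ne']
  ring

theorem deriv_zero (hΦ : IsSteadyStateSolution R Λ Φ Φ' Φ'') (hR : 0 < R) : Φ' 0 = 0 := by
  have hcont : ContinuousOn (fun r => r * (Φ r - Λ * exp (Φ r) - Φ'' r)) (Icc 0 R) :=
    continuousOn_id.mul (hΦ.continuousOn_reaction.sub hΦ.continuousOn_deriv2)
  have h0 : (0 : ℝ) ∈ Icc 0 R := left_mem_Icc.mpr hR.le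
  have hnhds : Icc 0 R ∈ 𝓝[>] (0 : ℝ) := Icc_mem_nhdsGT hR
  have heq : Φ' =ᶠ[𝓝[>] 0] fun r => r * (Φ r - Λ * exp (Φ r) - Φ'' r) := by
    filter_upwards [Ioo_mem_nhdsGT hR] with r hr
    rw [hΦ.ode r hr]
    field_simp [hr.1.ne']
    ring
  simpa using tendsto_nhds_unique_of_eventuallyEq
    ((hΦ.continuousOn_deriv 0 h0).mono_of_mem_nhdsWithin hnhds)
    ((hcont 0 h0).mono_of_mem_nhdsWithin hnhds) heq

-- Arguing with the flux `r Φ'`, whose derivative is `r (Φ - Λ e^Φ)`, rather than with `Φ''`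
-- covers the critical point `x = 0` as well.

theorem eventually_deriv_pos_right (hΦ : IsSteadyStateSolution R Λ Φ Φ' Φ'') (hx : x ∈ Ico 0 R)
    (hcrit : Φ' x = 0) (hF : 0 < Φ x - Λ * exp (Φ x)) : ∀ᶠ y in 𝓝[>] x, 0 < Φ' y := by
  have hreaction : ∀ᶠ y in 𝓝[>] x, 0 < Φ y - Λ * exp (Φ y) :=
    ((hΦ.continuousOn_reaction x (Ico_subset_Icc_self hx)).mono_of_mem_nhdsWithin
      (Icc_mem_nhdsGT_of_mem hx)).eventually (lt_mem_nhds hF)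
  have hflux := eventually_lt_nhdsGT_of_deriv_pos hx.2
    (hΦ.continuousOn_flux.mono (Icc_subset_Icc_left hx.1))
    (fun y hy => hΦ.hasDerivAt_flux ⟨hx.1.trans_lt hy.1, hy.2⟩)
    (hreaction.and self_mem_nhdsWithin |>.mono fun y hy => mul_pos (hx.1.trans_lt hy.2) hy.1)
  filter_upwards [hflux, self_mem_nhdsWithin] with y hy hxy
  rw [hcrit, mul_zero] at hy
  exact pos_of_mul_pos_right hy (hx.1.trans hxy.le)

theorem eventually_deriv_neg_right (hΦ : IsSteadyStateSolution R Λ Φ Φ' Φ'') (hx : x ∈ Ico 0 R)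
    (hcrit : Φ' x = 0) (hF : Φ x - Λ * exp (Φ x) < 0) : ∀ᶠ y in 𝓝[>] x, Φ' y < 0 := by
  have hreaction : ∀ᶠ y in 𝓝[>] x, Φ y - Λ * exp (Φ y) < 0 :=
    ((hΦ.continuousOn_reaction x (Ico_subset_Icc_self hx)).mono_of_mem_nhdsWithin
      (Icc_mem_nhdsGT_of_mem hx)).eventually (gt_mem_nhds hF)
  have hflux := eventually_gt_nhdsGT_of_deriv_neg hx.2
    (hΦ.continuousOn_flux.mono (Icc_subset_Icc_left hx.1))
    (fun y hy => hΦ.hasDerivAt_flux ⟨hx.1.trans_lt hy.1, hy.2⟩)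
    (hreaction.and self_mem_nhdsWithin |>.mono fun y hy =>
      mul_neg_of_pos_of_neg (hx.1.trans_lt hy.2) hy.1)
  filter_upwards [hflux, self_mem_nhdsWithin] with y hy hxy
  rw [hcrit, mul_zero] at hy
  exact neg_of_mul_neg_right hy (hx.1.trans hxy.le)

theorem eventually_deriv_pos_left (hΦ : IsSteadyStateSolution R Λ Φ Φ' Φ'') (hx : x ∈ Ioc 0 R)
    (hcrit : Φ' x = 0) (hF : Φ x - Λ * exp (Φ x) < 0) : ∀ᶠ y in 𝓝[<] x, 0 < Φ' y := by
  have hreaction : ∀ᶠ y in 𝓝[<] x, Φ y - Λ * exp (Φ y) < 0 :=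
    ((hΦ.continuousOn_reaction x (Ioc_subset_Icc_self hx)).mono_of_mem_nhdsWithin
      (Icc_mem_nhdsLT_of_mem hx)).eventually (gt_mem_nhds hF)
  have hflux := eventually_gt_nhdsLT_of_deriv_neg hx.1
    (hΦ.continuousOn_flux.mono (Icc_subset_Icc_right hx.2))
    (fun y hy => hΦ.hasDerivAt_flux ⟨hy.1, hy.2.trans_le hx.2⟩)
    (hreaction.and (Ioo_mem_nhdsLT hx.1) |>.mono fun y hy => mul_neg_of_pos_of_neg hy.2.1 hy.1)
  filter_upwards [hflux, Ioo_mem_nhdsLT hx.1] with y hy hy0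
  rw [hcrit, mul_zero] at hy
  exact pos_of_mul_pos_right hy hy0.1.le

theorem nonneg (hΦ : IsSteadyStateSolution R Λ Φ Φ' Φ'') (hR : 0 < R) (hΛ : 0 ≤ Λ)
    (hΦR : Φ R = 0) : ∀ r ∈ Icc 0 R, 0 ≤ Φ r := by
  obtain ⟨r₀, hr₀, hmin⟩ :=
    isCompact_Icc.exists_isMinOn (nonempty_Icc.mpr hR.le) hΦ.continuousOn
  intro r hr
  by_contra! hneg
  have hΦr₀ : Φ r₀ < 0 := (hmin hr).trans_lt hneg
  have hr₀R : r₀ < R := hr₀.2.lt_of_ne (by rintro rfl; linarith)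
  have hcrit : Φ' r₀ = 0 := by
    rcases hr₀.1.eq_or_lt with h | h
    · exact h ▸ hΦ.deriv_zero hR
    · exact (hmin.isLocalMin (Icc_mem_nhds h hr₀R)).hasDerivAt_eq_zero
        (hΦ.hasDerivAt r₀ ⟨h, hr₀R⟩)
  have hF : Φ r₀ - Λ * exp (Φ r₀) < 0 := by nlinarith [exp_pos (Φ r₀)]
  obtain ⟨y, hy, hyR⟩ := ((eventually_gt_nhdsGT_of_deriv_neg hr₀R
    (hΦ.continuousOn.mono (Icc_subset_Icc_left hr₀.1))
    (fun y hy => hΦ.hasDerivAt y ⟨hr₀.1.trans_lt hy.1, hy.2⟩)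
    (hΦ.eventually_deriv_neg_right ⟨hr₀.1, hr₀R⟩ hcrit hF)).and (Ioo_mem_nhdsGT hr₀R)).exists
  exact hy.not_ge (hmin ⟨hr₀.1.trans hyR.1.le, hyR.2.le⟩)

theorem deriv_boundary_neg (hΦ : IsSteadyStateSolution R Λ Φ Φ' Φ'') (hR : 0 < R) (hΛ : 0 < Λ)
    (hΦR : Φ R = 0) : Φ' R < 0 := by
  have hnonneg : ∀ y ∈ Ioo 0 R, Φ R ≤ Φ y := fun y hy =>
    hΦR ▸ hΦ.nonneg hR hΛ.le hΦR y (Ioo_subset_Icc_self hy)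
  refine (nonpos_of_forall_le_of_continuousOn_deriv hR hΦ.continuousOn hΦ.continuousOn_deriv
    hΦ.hasDerivAt hnonneg).lt_of_ne fun hcrit => ?_
  have hF : Φ R - Λ * exp (Φ R) < 0 := by rw [hΦR, exp_zero]; linarith
  obtain ⟨y, hy, hyR⟩ := ((eventually_lt_nhdsLT_of_deriv_pos hR hΦ.continuousOn hΦ.hasDerivAt
    (hΦ.eventually_deriv_pos_left ⟨hR, le_rfl⟩ hcrit hF)).and (Ioo_mem_nhdsLT hR)).exists
  exact hy.not_ge (hnonneg y hyR)

/-- Away from `r = 0` the system for `(Φ, Φ')` is Lipschitz in the state as long as `Φ` stays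
below its maximum, so `Φ` coincides with the constant solution through an equilibrium. -/
theorem eqOn_Icc_of_equilibrium (hΦ : IsSteadyStateSolution R Λ Φ Φ' Φ'')
    (hc : c ∈ Ioo 0 R) (hcrit : Φ' c = 0) (heq : Φ c - Λ * exp (Φ c) = 0) :
    ∀ r ∈ Icc c R, Φ r = Φ c := by
  obtain ⟨xM, -, hmax⟩ :=
    isCompact_Icc.exists_isMaxOn (nonempty_Icc.mpr (hc.1.trans hc.2).le) hΦ.continuousOn
  set B := Φ xM
  have hsub : Icc c R ⊆ Icc 0 R := Icc_subset_Icc_left hc.1.le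
  have hIco : ∀ t ∈ Ico c R, t ∈ Ioo 0 R := fun t ht => ⟨hc.1.trans_le ht.1, ht.2⟩
  have hlip : ∀ t ∈ Ico c R, LipschitzOnWith (1 + |Λ| * exp B + 1 / c).toNNReal
      (fun y : ℝ × ℝ => (y.2, y.1 - Λ * exp y.1 - y.2 / t)) {y | y.1 ≤ B} := fun t ht =>
    lipschitzOnWith_radialField hc.1 ht.1 (Real.le_coe_toNNReal _)
  have hsol : ∀ t ∈ Ico c R, HasDerivWithinAt (fun t => (Φ t, Φ' t))
      (Φ' t, Φ t - Λ * exp (Φ t) - Φ' t / t) (Ici t) t := fun t ht => by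
    rw [← hΦ.ode t (hIco t ht)]
    exact ((hΦ.hasDerivAt t (hIco t ht)).prodMk
      (hΦ.hasDerivAt_deriv t (hIco t ht))).hasDerivWithinAt
  have hconst : ∀ t ∈ Ico c R, HasDerivWithinAt (fun _ => (Φ c, (0 : ℝ)))
      ((0 : ℝ), Φ c - Λ * exp (Φ c) - 0 / t) (Ici t) t := fun t _ => by
    rw [heq, zero_div, sub_zero]
    exact hasDerivWithinAt_const _ _ _
  have huniq := ODE_solution_unique_of_mem_Icc_right hlip
    ((hΦ.continuousOn.mono hsub).prodMk (hΦ.continuousOn_deriv.mono hsub)) hsol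
    (fun t ht => hmax (hsub (Ico_subset_Icc_self ht)))
    continuousOn_const hconst (fun _ _ => hmax (Ioo_subset_Icc_self hc)) (by rw [hcrit])
  exact fun r hr => congrArg Prod.fst (huniq hr)

theorem continuousOn_radialEnergy (hΦ : IsSteadyStateSolution R Λ Φ Φ' Φ'') :
    ContinuousOn (radialEnergy Λ Φ Φ') (Icc 0 R) :=
  ((hΦ.continuousOn_deriv.pow 2).div_const 2 |>.add
    (continuousOn_const.mul hΦ.continuousOn.rexp)).sub ((hΦ.continuousOn.pow 2).div_const 2)

theorem hasDerivAt_radialEnergy (hΦ : IsSteadyStateSolution R Λ Φ Φ' Φ'') {r : ℝ}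
    (hr : r ∈ Ioo 0 R) : HasDerivAt (radialEnergy Λ Φ Φ') (-(Φ' r ^ 2 / r)) r := by
  have h1 := hΦ.hasDerivAt r hr
  have h2 := hΦ.hasDerivAt_deriv r hr
  refine ((((h2.pow 2).div_const 2).add (h1.exp.const_mul Λ)).sub
    ((h1.pow 2).div_const 2)).congr_deriv ?_
  rw [hΦ.ode r hr]
  field_simp [hr.1.ne']
  ring

theorem antitoneOn_radialEnergy (hΦ : IsSteadyStateSolution R Λ Φ Φ' Φ'') :
    AntitoneOn (radialEnergy Λ Φ Φ') (Icc 0 R) :=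
  antitoneOn_Icc_of_hasDerivAt_nonpos hΦ.continuousOn_radialEnergy
    (fun _ hr => hΦ.hasDerivAt_radialEnergy hr)
    (fun _ hr => neg_nonpos.mpr (div_nonneg (sq_nonneg _) hr.1.le))

theorem strictAntiOn_radialEnergy (hΦ : IsSteadyStateSolution R Λ Φ Φ' Φ'') (ha : 0 ≤ a)
    (hb : b ≤ R) (hne : ∀ r ∈ Ioo a b, Φ' r ≠ 0) :
    StrictAntiOn (radialEnergy Λ Φ Φ') (Icc a b) :=
  strictAntiOn_Icc_of_hasDerivAt_neg (hΦ.continuousOn_radialEnergy.mono (Icc_subset_Icc ha hb))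
    (fun _ hr => hΦ.hasDerivAt_radialEnergy ⟨ha.trans_lt hr.1, hr.2.trans_le hb⟩)
    (fun r hr => neg_neg_of_pos (div_pos (pow_two_pos_of_ne_zero (hne r hr)) (ha.trans_lt hr.1)))

theorem exists_deriv_eq_zero_of_reaction_neg (hΦ : IsSteadyStateSolution R Λ Φ Φ' Φ'')
    (hc : c ∈ Ioo 0 R) (hcrit : Φ' c = 0) (hF : Φ c - Λ * exp (Φ c) < 0) :
    ∃ b ∈ Ico 0 c, Φ' b = 0 ∧ ∀ r ∈ Ioo b c, 0 < Φ' r := by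
  obtain ⟨a, hac, ha⟩ := (nhdsLT_basis c).eventually_iff.mp
    ((hΦ.eventually_deriv_pos_left (Ioo_subset_Ioc_self hc) hcrit hF).and (Ioo_mem_nhdsLT hc.1))
  obtain ⟨y, hy⟩ := nonempty_Ioo.mpr hac
  obtain ⟨b, hb, hbcrit, hpos⟩ := exists_last_zero_of_continuousOn (ha hy).2.1.le
    (hΦ.continuousOn_deriv.mono (Icc_subset_Icc_right (hy.2.trans hc.2).le))
    (hΦ.deriv_zero (hc.1.trans hc.2)).le (ha hy).1
  refine ⟨b, ⟨hb.1, hb.2.trans hy.2⟩, hbcrit, fun r hr => ?_⟩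
  rcases le_or_gt r y with hry | hry
  · exact hpos r ⟨hr.1, hry⟩
  · exact (ha ⟨hy.1.trans hry, hr.2⟩).1

/-- If `Φ(c) < Λ e^{Φ(c)}`, let `b < c` be the previous critical point, so `Φ(b) < Φ(c)` and
`Φ(b) ≥ Λ e^{Φ(b)}`. Then `Φ` passes a zero `s ∈ (0, Φ(b)]` of `t - Λ e^t` at some `r > c`, and
for the energy `E` we get `E(r) > Λ e^s - s²/2 ≥ Λ e^{Φ(b)} - Φ(b)²/2 = E(b) > E(c)`, although
`E` is non-increasing. -/
theorem reaction_nonneg_of_deriv_neg_right (hΦ : IsSteadyStateSolution R Λ Φ Φ' Φ'')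
    (hΛ : 0 < Λ) (hΦR : Φ R = 0) (hc : c ∈ Ioo 0 R) (hcrit : Φ' c = 0)
    (hdec : ∀ r ∈ Ioc c R, Φ' r < 0) : 0 ≤ Φ c - Λ * exp (Φ c) := by
  by_contra! hF
  obtain ⟨b, hb, hbcrit, hpos⟩ := hΦ.exists_deriv_eq_zero_of_reaction_neg hc hcrit hF
  have hFb : 0 ≤ Φ b - Λ * exp (Φ b) := by
    by_contra! hFb
    obtain ⟨r, hr, hrc⟩ := ((hΦ.eventually_deriv_neg_right ⟨hb.1, hb.2.trans hc.2⟩ hbcrit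
      hFb).and (Ioo_mem_nhdsGT hb.2)).exists
    exact hr.not_gt (hpos r hrc)
  have hΦbc : Φ b < Φ c := strictMonoOn_Icc_of_hasDerivAt_pos
    (hΦ.continuousOn.mono (Icc_subset_Icc hb.1 hc.2.le))
    (fun r hr => hΦ.hasDerivAt r ⟨hb.1.trans_lt hr.1, hr.2.trans hc.2⟩) hpos
    (left_mem_Icc.mpr hb.2.le) (right_mem_Icc.mpr hb.2.le) hb.2
  have hΦb : 0 ≤ Φ b :=
    hΦ.nonneg (hc.1.trans hc.2) hΛ.le hΦR b ⟨hb.1, hb.2.le.trans hc.2.le⟩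
  obtain ⟨s, hs, hs0⟩ := intermediate_value_Icc hΦb
    (continuous_id.sub (continuous_const.mul continuous_exp)).continuousOn
    (show (0 : ℝ) ∈ Icc (0 - Λ * exp 0) (Φ b - Λ * exp (Φ b)) from
      ⟨by rw [exp_zero]; linarith, hFb⟩)
  have hs_pos : 0 < s := hs.1.lt_of_ne (by rintro rfl; simp at hs0; linarith)
  obtain ⟨r, hr, hΦr⟩ := intermediate_value_Icc' hc.2.le
    (hΦ.continuousOn.mono (Icc_subset_Icc_left hc.1.le))
    (show s ∈ Icc (Φ R) (Φ c) from ⟨hΦR ▸ hs_pos.le, hs.2.trans hΦbc.le⟩)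
  have hcr : c < r := hr.1.lt_of_ne (by rintro rfl; linarith [hs.2])
  have hEb : radialEnergy Λ Φ Φ' b = Λ * exp (Φ b) - Φ b ^ 2 / 2 := by
    simp [radialEnergy, hbcrit]
  have hEr : Λ * exp s - s ^ 2 / 2 < radialEnergy Λ Φ Φ' r := by
    have : 0 < Φ' r ^ 2 := pow_two_pos_of_ne_zero (hdec r ⟨hcr, hr.2⟩).ne
    simp only [radialEnergy, hΦr]
    linarith
  have hEcb : radialEnergy Λ Φ Φ' c < radialEnergy Λ Φ Φ' b :=
    hΦ.strictAntiOn_radialEnergy hb.1 hc.2.le (fun r hr => (hpos r hr).ne')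
      (left_mem_Icc.mpr hb.2.le) (right_mem_Icc.mpr hb.2.le) hb.2
  have hErc : radialEnergy Λ Φ Φ' r ≤ radialEnergy Λ Φ Φ' c :=
    hΦ.antitoneOn_radialEnergy (Ioo_subset_Icc_self hc) (Icc_subset_Icc_left hc.1.le hr) hcr.le
  linarith [mul_exp_sub_sq_le_of_reaction_nonneg hΛ.le hs.2 hs0 hFb]

theorem deriv_neg (hΦ : IsSteadyStateSolution R Λ Φ Φ' Φ'') (hΛ : 0 < Λ) (hΦR : Φ R = 0) :
    ∀ r ∈ Ioc 0 R, Φ' r < 0 := by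
  intro r₀ hr₀
  by_contra! hr₀pos
  have hR : 0 < R := hr₀.1.trans_le hr₀.2
  obtain ⟨c, hc, hcrit, hdec⟩ := exists_last_zero_of_continuousOn hr₀.2
    (hΦ.continuousOn_deriv.mono (Icc_subset_Icc_left hr₀.1.le)).neg (neg_nonpos.mpr hr₀pos)
    (neg_pos.mpr (hΦ.deriv_boundary_neg hR hΛ hΦR))
  have hcIoo : c ∈ Ioo 0 R := ⟨hr₀.1.trans_le hc.1, hc.2⟩
  replace hcrit : Φ' c = 0 := neg_eq_zero.mp hcrit
  replace hdec : ∀ r ∈ Ioc c R, Φ' r < 0 := fun r hr => neg_pos.mp (hdec r hr)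
  have hFc : Φ c - Λ * exp (Φ c) ≤ 0 := by
    by_contra! hF
    obtain ⟨r, hr, hrc⟩ := ((hΦ.eventually_deriv_pos_right ⟨hcIoo.1.le, hc.2⟩ hcrit hF).and
      (Ioo_mem_nhdsGT hc.2)).exists
    exact hr.not_gt (hdec r ⟨hrc.1, hrc.2.le⟩)
  have hΦRc : Φ R = Φ c := hΦ.eqOn_Icc_of_equilibrium hcIoo hcrit
    (hFc.antisymm (hΦ.reaction_nonneg_of_deriv_neg_right hΛ hΦR hcIoo hcrit hdec)) R
    (right_mem_Icc.mpr hc.2.le)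
  have hΦRc' : Φ R < Φ c := strictAntiOn_Icc_of_hasDerivAt_neg
    (hΦ.continuousOn.mono (Icc_subset_Icc_left hcIoo.1.le))
    (fun r hr => hΦ.hasDerivAt r ⟨hcIoo.1.trans hr.1, hr.2⟩) (fun r hr => hdec r ⟨hr.1, hr.2.le⟩)
    (left_mem_Icc.mpr hc.2.le) (right_mem_Icc.mpr hc.2.le) hc.2
  exact hΦRc'.ne hΦRc

end IsSteadyStateSolution

/-! ## Mode equations -/

/-- The mode equation `-w'' - w'/r + (m/r² + 1) w = Λ e^Φ w` on `(0, R)` as a first-order system;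
`m = n²` gives the `n`-th Fourier mode of the linearization at `Φ`. -/
structure IsModeSolution (R Λ : ℝ) (Φ : ℝ → ℝ) (m : ℝ) (w w' : ℝ → ℝ) : Prop where
  continuousOn : ContinuousOn w (Icc 0 R)
  continuousOn_deriv : ContinuousOn w' (Icc 0 R)
  hasDerivAt : ∀ r ∈ Ioo 0 R, HasDerivAt w (w' r) r
  hasDerivAt_deriv : ∀ r ∈ Ioo 0 R,
    HasDerivAt w' (-(w' r) / r + (m / r ^ 2 + 1 - Λ * exp (Φ r)) * w r) r

theorem isModeSolution_derivWithin {R Λ m : ℝ} {Φ h : ℝ → ℝ} (hR : 0 < R)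
    (h1 : ContDiffOn ℝ 1 h (Icc 0 R)) (h2 : ContDiffOn ℝ 2 h (Ioo 0 R))
    (heq : ∀ r ∈ Ioo (0 : ℝ) R,
      -(deriv (deriv h) r) - deriv h r / r + (m / r ^ 2 + 1) * h r = Λ * exp (Φ r) * h r) :
    IsModeSolution R Λ Φ m h (derivWithin h (Icc 0 R)) := by
  refine ⟨h1.continuousOn, h1.continuousOn_derivWithin (uniqueDiffOn_Icc hR) le_rfl,
    fun r hr => hasDerivAt_derivWithin_Icc h1 hr, fun r hr => ?_⟩
  convert hasDerivAt_derivWithin_Icc_deriv h2 hr using 1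
  rw [derivWithin_of_mem_nhds (Icc_mem_nhds hr.1 hr.2)]
  linear_combination heq r hr

theorem IsSteadyStateSolution.isModeSolution_neg_deriv {R Λ : ℝ} {Φ Φ' Φ'' : ℝ → ℝ}
    (hΦ : IsSteadyStateSolution R Λ Φ Φ' Φ'') : IsModeSolution R Λ Φ 1 (-Φ') (-Φ'') where
  continuousOn := hΦ.continuousOn_deriv.neg
  continuousOn_deriv := hΦ.continuousOn_deriv2.neg
  hasDerivAt r hr := (hΦ.hasDerivAt_deriv r hr).neg
  hasDerivAt_deriv r hr := by
    have hode : Φ'' =ᶠ[𝓝 r] fun s => Φ s - Λ * exp (Φ s) - Φ' s / s :=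
      eventually_of_mem (isOpen_Ioo.mem_nhds hr) hΦ.ode
    have h1 := hΦ.hasDerivAt r hr
    refine (((h1.sub (h1.exp.const_mul Λ)).sub ((hΦ.hasDerivAt_deriv r hr).div
      (hasDerivAt_id r) hr.1.ne')).congr_of_eventuallyEq hode).neg.congr_deriv ?_
    simp only [Pi.neg_apply, id]
    field_simp [hr.1.ne']
    ring

noncomputable def radialWronskian (v v' w w' : ℝ → ℝ) (r : ℝ) : ℝ :=
  r * (v r * w' r - w r * v' r)

namespace IsModeSolution

variable {R Λ m m₀ : ℝ} {Φ Φ' Φ'' w w' v v' : ℝ → ℝ}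

theorem sub (hw : IsModeSolution R Λ Φ m w w') (hv : IsModeSolution R Λ Φ m v v') :
    IsModeSolution R Λ Φ m (w - v) (w' - v') where
  continuousOn := hw.continuousOn.sub hv.continuousOn
  continuousOn_deriv := hw.continuousOn_deriv.sub hv.continuousOn_deriv
  hasDerivAt r hr := (hw.hasDerivAt r hr).sub (hv.hasDerivAt r hr)
  hasDerivAt_deriv r hr := ((hw.hasDerivAt_deriv r hr).sub (hv.hasDerivAt_deriv r hr)).congr_deriv
    (by simp only [Pi.sub_apply]; ring)

theorem neg (hw : IsModeSolution R Λ Φ m w w') : IsModeSolution R Λ Φ m (-w) (-w') where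
  continuousOn := hw.continuousOn.neg
  continuousOn_deriv := hw.continuousOn_deriv.neg
  hasDerivAt r hr := (hw.hasDerivAt r hr).neg
  hasDerivAt_deriv r hr :=
    (hw.hasDerivAt_deriv r hr).neg.congr_deriv (by simp only [Pi.neg_apply]; ring)

theorem continuousOn_flux (hw : IsModeSolution R Λ Φ m w w') :
    ContinuousOn (fun s => s * w' s) (Icc 0 R) :=
  continuousOn_id.mul hw.continuousOn_deriv

theorem hasDerivAt_flux (hw : IsModeSolution R Λ Φ m w w') {r : ℝ} (hr : r ∈ Ioo 0 R) :
    HasDerivAt (fun s => s * w' s) (r * ((m / r ^ 2 + 1 - Λ * exp (Φ r)) * w r)) r := by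
  refine ((hasDerivAt_id r).mul (hw.hasDerivAt_deriv r hr)).congr_deriv ?_
  rw [id]
  field_simp [hr.1.ne']
  ring

theorem nonpos_of_potential_pos (hw : IsModeSolution R Λ Φ m w w')
    (hq : ∀ r ∈ Ioo 0 R, 0 < m / r ^ 2 + 1 - Λ * exp (Φ r)) (hw0 : w 0 = 0) (hwR : w R = 0) :
    ∀ r ∈ Icc 0 R, w r ≤ 0 := by
  intro r hr
  by_contra! hpos
  have hR : 0 < R := hr.1.lt_of_ne (by rintro rfl; linarith) |>.trans_le hr.2
  obtain ⟨r₀, hr₀, hmax⟩ :=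
    isCompact_Icc.exists_isMaxOn (nonempty_Icc.mpr hR.le) hw.continuousOn
  have hwr₀ : 0 < w r₀ := hpos.trans_le (hmax hr)
  have hr₀' : r₀ ∈ Ioo 0 R :=
    ⟨hr₀.1.lt_of_ne (by rintro rfl; linarith), hr₀.2.lt_of_ne (by rintro rfl; linarith)⟩
  have hcrit : w' r₀ = 0 := (hmax.isLocalMax (Icc_mem_nhds hr₀'.1 hr₀'.2)).hasDerivAt_eq_zero
    (hw.hasDerivAt r₀ hr₀')
  have hwpos : ∀ᶠ y in 𝓝[>] r₀, 0 < w y := ((hw.continuousOn r₀ hr₀).mono_of_mem_nhdsWithin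
    (Icc_mem_nhdsGT_of_mem ⟨hr₀.1, hr₀'.2⟩)).eventually (lt_mem_nhds hwr₀)
  have hflux := eventually_lt_nhdsGT_of_deriv_pos hr₀'.2
    (hw.continuousOn_flux.mono (Icc_subset_Icc_left hr₀.1))
    (fun y hy => hw.hasDerivAt_flux ⟨hr₀.1.trans_lt hy.1, hy.2⟩)
    (by
      filter_upwards [hwpos, Ioo_mem_nhdsGT hr₀'.2] with y hy hyR
      exact mul_pos (hr₀'.1.trans hyR.1) (mul_pos (hq y ⟨hr₀'.1.trans hyR.1, hyR.2⟩) hy))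
  have hderiv : ∀ᶠ y in 𝓝[>] r₀, 0 < w' y := by
    filter_upwards [hflux, self_mem_nhdsWithin] with y hy hy'
    rw [hcrit, mul_zero] at hy
    exact pos_of_mul_pos_right hy (hr₀.1.trans hy'.le)
  obtain ⟨y, hy, hyR⟩ := ((eventually_lt_nhdsGT_of_deriv_pos hr₀'.2
    (hw.continuousOn.mono (Icc_subset_Icc_left hr₀.1))
    (fun y hy => hw.hasDerivAt y ⟨hr₀.1.trans_lt hy.1, hy.2⟩) hderiv).and
    (Ioo_mem_nhdsGT hr₀'.2)).exists
  exact hy.not_ge (hmax ⟨hr₀.1.trans hyR.1.le, hyR.2.le⟩)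

theorem continuousOn_radialWronskian (hv : IsModeSolution R Λ Φ m₀ v v')
    (hw : IsModeSolution R Λ Φ m w w') : ContinuousOn (radialWronskian v v' w w') (Icc 0 R) :=
  continuousOn_id.mul ((hv.continuousOn.mul hw.continuousOn_deriv).sub
    (hw.continuousOn.mul hv.continuousOn_deriv))

theorem hasDerivAt_radialWronskian (hv : IsModeSolution R Λ Φ m₀ v v')
    (hw : IsModeSolution R Λ Φ m w w') {r : ℝ} (hr : r ∈ Ioo 0 R) :
    HasDerivAt (radialWronskian v v' w w') ((m - m₀) / r * (v r * w r)) r := by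
  refine ((hasDerivAt_id r).mul (((hv.hasDerivAt r hr).mul (hw.hasDerivAt_deriv r hr)).sub
    ((hw.hasDerivAt r hr).mul (hv.hasDerivAt_deriv r hr)))).congr_deriv ?_
  simp only [Pi.sub_apply, Pi.mul_apply, id]
  field_simp [hr.1.ne']
  ring

theorem div_eq_of_radialWronskian_eq_zero (hv : IsModeSolution R Λ Φ m₀ v v')
    (hw : IsModeSolution R Λ Φ m w w') {s c : ℝ} (hs : 0 < s) (hsc : s ≤ c) (hc : c ≤ R)
    (hvpos : ∀ r ∈ Icc s c, 0 < v r) (hW : ∀ r ∈ Icc s c, radialWronskian v v' w w' r = 0) :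
    w c / v c = w s / v s := by
  have hsub : Icc s c ⊆ Icc 0 R := Icc_subset_Icc hs.le hc
  refine constant_of_has_deriv_right_zero ((hw.continuousOn.mono hsub).div
    (hv.continuousOn.mono hsub) fun r hr => (hvpos r hr).ne') (fun r hr => ?_) c
    (right_mem_Icc.mpr hsc)
  have hr' : r ∈ Ioo 0 R := ⟨hs.trans_le hr.1, hr.2.trans_le hc⟩
  have hWr := hW r (Ico_subset_Icc_self hr)
  simp only [radialWronskian, mul_eq_zero, hr'.1.ne', false_or] at hWr
  refine (((hw.hasDerivAt r hr').div (hv.hasDerivAt r hr')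
    (hvpos r (Ico_subset_Icc_self hr)).ne').congr_deriv ?_).hasDerivWithinAt
  rw [div_eq_zero_iff]
  left
  linarith

/-- Sturm comparison: on a positive hump `(a, c)` of `w` the Wronskian `r (v w' - w v')` is
non-decreasing, `≥ 0` at `a` and `≤ 0` at `c`, hence zero, so `w / v` is constant up to `c`. -/
theorem nonpos_of_pos_solution (hv : IsModeSolution R Λ Φ m₀ v v')
    (hvpos : ∀ r ∈ Ioc 0 R, 0 < v r) (hm : m₀ ≤ m) (hw : IsModeSolution R Λ Φ m w w')
    (hw0 : w 0 = 0) (hwR : w R = 0) : ∀ r ∈ Icc 0 R, w r ≤ 0 := by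
  intro s hs
  by_contra! hws
  obtain ⟨a, ha, c, hc, hwa, hwc, hpos⟩ :=
    exists_pos_component_of_continuousOn hw.continuousOn hw0.le hwR.le hs hws
  have hs0 : 0 < s := ha.1.trans_lt ha.2
  have hac : a < c := ha.2.trans_le hc.1.le
  have hsub : Icc a c ⊆ Icc 0 R := Icc_subset_Icc ha.1 hc.2
  have hIoo : ∀ r ∈ Ioo a c, r ∈ Ioo 0 R := fun r hr => ⟨ha.1.trans_lt hr.1, hr.2.trans_le hc.2⟩
  set W := radialWronskian v v' w w'
  have hmono : MonotoneOn W (Icc a c) := monotoneOn_Icc_of_hasDerivAt_nonneg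
    ((continuousOn_radialWronskian hv hw).mono hsub)
    (fun r hr => hasDerivAt_radialWronskian hv hw (hIoo r hr))
    (fun r hr => mul_nonneg (div_nonneg (sub_nonneg.mpr hm) (hIoo r hr).1.le)
      (mul_nonneg (hvpos r (Ioo_subset_Ioc_self (hIoo r hr))).le (hpos r hr).le))
  have hWa : 0 ≤ W a := by
    rcases ha.1.eq_or_lt with h | h
    · simp [W, radialWronskian, ← h]
    · have hw'a := nonneg_of_forall_le_of_continuousOn_deriv hac (hw.continuousOn.mono hsub)
        (hw.continuousOn_deriv.mono hsub) (fun r hr => hw.hasDerivAt r (hIoo r hr))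
        (fun r hr => hwa ▸ (hpos r hr).le)
      have hva := hvpos a ⟨h, hac.le.trans hc.2⟩
      simp only [W, radialWronskian, hwa, zero_mul, sub_zero]
      positivity
  have hWc : W c ≤ 0 := by
    have hw'c := nonpos_of_forall_le_of_continuousOn_deriv hac (hw.continuousOn.mono hsub)
      (hw.continuousOn_deriv.mono hsub) (fun r hr => hw.hasDerivAt r (hIoo r hr))
      (fun r hr => hwc ▸ (hpos r hr).le)
    have hvc := hvpos c ⟨ha.1.trans_lt hac, hc.2⟩
    simp only [W, radialWronskian, hwc, zero_mul, sub_zero]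
    exact mul_nonpos_of_nonneg_of_nonpos (ha.1.trans hac.le)
      (mul_nonpos_of_nonneg_of_nonpos hvc.le hw'c)
  have hW : ∀ r ∈ Icc s c, W r = 0 := fun r hr =>
    have hr' : r ∈ Icc a c := ⟨ha.2.le.trans hr.1, hr.2⟩
    le_antisymm ((hmono hr' (right_mem_Icc.mpr hac.le) hr.2).trans hWc)
      (hWa.trans (hmono (left_mem_Icc.mpr hac.le) hr' hr'.1))
  have hratio := div_eq_of_radialWronskian_eq_zero hv hw hs0 hc.1.le hc.2
    (fun r hr => hvpos r ⟨hs0.trans_le hr.1, hr.2.trans hc.2⟩) hW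
  rw [hwc, zero_div] at hratio
  exact (div_pos hws (hvpos s ⟨hs0, hs.2⟩)).ne' hratio.symm

theorem nonpos (hΦ : IsSteadyStateSolution R Λ Φ Φ' Φ'') (hΦR : Φ R = 0) (hm : 1 ≤ m)
    (hw : IsModeSolution R Λ Φ m w w') (hw0 : w 0 = 0) (hwR : w R = 0) :
    ∀ r ∈ Icc 0 R, w r ≤ 0 := by
  rcases le_or_gt Λ 0 with hΛ | hΛ
  · refine hw.nonpos_of_potential_pos (fun r _ => ?_) hw0 hwR
    have : Λ * exp (Φ r) ≤ 0 := mul_nonpos_of_nonpos_of_nonneg hΛ (exp_pos _).le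
    have : 0 ≤ m / r ^ 2 := div_nonneg (zero_le_one.trans hm) (sq_nonneg r)
    linarith
  · exact hΦ.isModeSolution_neg_deriv.nonpos_of_pos_solution
      (fun r hr => neg_pos.mpr (hΦ.deriv_neg hΛ hΦR r hr)) hm hw hw0 hwR

theorem eq_zero (hΦ : IsSteadyStateSolution R Λ Φ Φ' Φ'') (hΦR : Φ R = 0) (hm : 1 ≤ m)
    (hw : IsModeSolution R Λ Φ m w w') (hw0 : w 0 = 0) (hwR : w R = 0) :
    ∀ r ∈ Icc 0 R, w r = 0 := fun r hr =>
  (hw.nonpos hΦ hΦR hm hw0 hwR r hr).antisymm <| neg_nonpos.mp <|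
    hw.neg.nonpos hΦ hΦR hm (by simp [hw0]) (by simp [hwR]) r hr

end IsModeSolution

theorem fourier_mode_dirichlet_uniqueness_general
    (R Λ : ℝ) (hR : 0 < R) (Φ : ℝ → ℝ)
    (hΦ : IsRadialSteadyState R Λ Φ)
    (n : ℕ) (hn : 1 ≤ n) (b : ℝ) (h₁ h₂ : ℝ → ℝ)
    (hh₁1 : ContDiffOn ℝ 1 h₁ (Set.Icc 0 R))
    (hh₁2 : ContDiffOn ℝ 2 h₁ (Set.Ioo 0 R))
    (hh₁eq : ∀ r ∈ Set.Ioo (0:ℝ) R,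
      -(deriv (deriv h₁) r) - deriv h₁ r / r + ((n:ℝ)^2 / r^2 + 1) * h₁ r
        = Λ * Real.exp (Φ r) * h₁ r)
    (hh₁0 : h₁ 0 = 0) (hh₁R : h₁ R = b)
    (hh₂1 : ContDiffOn ℝ 1 h₂ (Set.Icc 0 R))
    (hh₂2 : ContDiffOn ℝ 2 h₂ (Set.Ioo 0 R))
    (hh₂eq : ∀ r ∈ Set.Ioo (0:ℝ) R,
      -(deriv (deriv h₂) r) - deriv h₂ r / r + ((n:ℝ)^2 / r^2 + 1) * h₂ r
        = Λ * Real.exp (Φ r) * h₂ r)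
    (hh₂0 : h₂ 0 = 0) (hh₂R : h₂ R = b) :
    ∀ r ∈ Set.Icc (0:ℝ) R, h₁ r = h₂ r := by
  have hw := (isModeSolution_derivWithin hR hh₁1 hh₁2 hh₁eq).sub
    (isModeSolution_derivWithin hR hh₂1 hh₂2 hh₂eq)
  have hm : (1 : ℝ) ≤ (n : ℝ) ^ 2 := one_le_pow₀ (by exact_mod_cast hn)
  intro r hr
  exact sub_eq_zero.mp (hw.eq_zero (hΦ.isSteadyStateSolution hR) hΦ.2.2.2 hm
    (by simp [hh₁0, hh₂0]) (by simp [hh₁R, hh₂R]) r hr)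

theorem fourier_mode_dirichlet_uniqueness
    (R Λ : ℝ) (hR : 0 < R) (hΛ : 0 ≤ Λ) (Φ : ℝ → ℝ)
    (hΦ : IsRadialSteadyState R Λ Φ)
    (n : ℕ) (hn : 1 ≤ n) (b : ℝ) (h₁ h₂ : ℝ → ℝ)
    (hh₁1 : ContDiffOn ℝ 1 h₁ (Set.Icc 0 R))
    (hh₁2 : ContDiffOn ℝ 2 h₁ (Set.Ioo 0 R))
    (hh₁eq : ∀ r ∈ Set.Ioo (0:ℝ) R,
      -(deriv (deriv h₁) r) - deriv h₁ r / r + ((n:ℝ)^2 / r^2 + 1) * h₁ r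
        = Λ * Real.exp (Φ r) * h₁ r)
    (hh₁0 : h₁ 0 = 0) (hh₁R : h₁ R = b)
    (hh₂1 : ContDiffOn ℝ 1 h₂ (Set.Icc 0 R))
    (hh₂2 : ContDiffOn ℝ 2 h₂ (Set.Ioo 0 R))
    (hh₂eq : ∀ r ∈ Set.Ioo (0:ℝ) R,
      -(deriv (deriv h₂) r) - deriv h₂ r / r + ((n:ℝ)^2 / r^2 + 1) * h₂ r
        = Λ * Real.exp (Φ r) * h₂ r)
    (hh₂0 : h₂ 0 = 0) (hh₂R : h₂ R = b) :
    ∀ r ∈ Set.Icc (0:ℝ) R, h₁ r = h₂ r :=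
  fourier_mode_dirichlet_uniqueness_general R Λ hR Φ hΦ n hn b h₁ h₂ hh₁1 hh₁2 hh₁eq hh₁0 hh₁R hh₂1
    hh₂2 hh₂eq hh₂0 hh₂R
end

section
/- Let R > 0 and let Φ be a pointwise minimal radial steady state with parameters (R, 1/e). Let w : ℝ → ℝ be continuously differentiable on [0, R], twice continuously differentiable on (0, R), and satisfy the linear equation −w''(r) − w'(r)/r + w(r) = (w(r) + 1)/e for every r ∈ (0, R), with w'(0) = 0 and w(R) = 0. Then Φ(r) ≥ w(r) for every r ∈ [0, R]. -/
/-- `Φ` is a pointwise minimal radial steady state with parameters `(R, Λ)`. -/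
def IsMinimalRadialSteadyState (R Λ : ℝ) (Φ : ℝ → ℝ) : Prop :=
  IsRadialSteadyState R Λ Φ ∧
  ∀ Ψ : ℝ → ℝ, IsRadialSteadyState R Λ Ψ → ∀ r ∈ Set.Icc (0:ℝ) R, Φ r ≤ Ψ r

open Set Filter Topology

/-- The planar Laplacian of a radial function, in the radial variable. -/
noncomputable def radialLaplacian (u : ℝ → ℝ) (r : ℝ) : ℝ :=
  deriv (deriv u) r + deriv u r / r

lemma hasDerivAt_mul_deriv {u : ℝ → ℝ} {r : ℝ} (hr : r ≠ 0)
    (hu : DifferentiableAt ℝ (deriv u) r) :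
    HasDerivAt (fun s => s * deriv u s) (r * radialLaplacian u r) r := by
  refine ((hasDerivAt_id' r).mul hu.hasDerivAt).congr_deriv ?_
  simp only [radialLaplacian]
  field_simp
  ring

lemma ContDiffOn.differentiableAt_deriv {f : ℝ → ℝ} {s : Set ℝ} {x : ℝ}
    (hf : ContDiffOn ℝ 2 f s) (hs : IsOpen s) (hx : x ∈ s) : DifferentiableAt ℝ (deriv f) x :=
  ((hf.deriv_of_isOpen hs (by norm_num : (1 : WithTop ℕ∞) + 1 ≤ 2)).differentiableOn
    one_ne_zero x hx).differentiableAt (hs.mem_nhds hx)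

lemma radialLaplacian_sub {f g : ℝ → ℝ} {s : Set ℝ} {r : ℝ} (hs : IsOpen s)
    (hf : ContDiffOn ℝ 2 f s) (hg : ContDiffOn ℝ 2 g s) (hr : r ∈ s) :
    radialLaplacian (f - g) r = radialLaplacian f r - radialLaplacian g r := by
  have hderiv : deriv (f - g) =ᶠ[𝓝 r] deriv f - deriv g := by
    filter_upwards [hs.mem_nhds hr] with t ht
    exact deriv_sub (hf.differentiableOn two_ne_zero t ht |>.differentiableAt (hs.mem_nhds ht))
      (hg.differentiableOn two_ne_zero t ht |>.differentiableAt (hs.mem_nhds ht))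
  simp only [radialLaplacian, hderiv.deriv_eq, hderiv.eq_of_nhds, Pi.sub_apply,
    deriv_sub (hf.differentiableAt_deriv hs hr) (hg.differentiableAt_deriv hs hr)]
  ring

theorem nonpos_of_radialLaplacian_pos {u : ℝ → ℝ} {R : ℝ}
    (hu1 : ContDiffOn ℝ 1 u (Icc 0 R)) (hu2 : ContDiffOn ℝ 2 u (Ioo 0 R))
    (hΔ : ∀ r ∈ Ioo 0 R, 0 < u r → 0 < radialLaplacian u r) (huR : u R ≤ 0) :
    ∀ r ∈ Icc 0 R, u r ≤ 0 := by
  by_contra! ⟨r, hr, hur⟩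
  obtain ⟨r₀, hr₀, hmax⟩ := isCompact_Icc.exists_isMaxOn ⟨r, hr⟩ hu1.continuousOn
  have hu₀ : 0 < u r₀ := hur.trans_le (hmax hr)
  have hr₀R : r₀ < R := hr₀.2.lt_of_ne (by rintro rfl; linarith)
  have hR : 0 < R := hr₀.1.trans_lt hr₀R
  obtain ⟨b, hr₀b, hb⟩ : ∃ b, r₀ < b ∧ Icc r₀ b ⊆ {s | 0 < u s ∧ s ∈ Icc r₀ R} := by
    have hnhds : Icc 0 R ∈ 𝓝[≥] r₀ :=
      mem_of_superset (Icc_mem_nhdsGE hr₀R) (Icc_subset_Icc_left hr₀.1)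
    have hpos : ∀ᶠ s in 𝓝[≥] r₀, 0 < u s :=
      ((hu1.continuousOn r₀ hr₀).mono_of_mem_nhdsWithin hnhds).eventually (lt_mem_nhds hu₀)
    exact mem_nhdsGE_iff_exists_Icc_subset.mp (hpos.and (Icc_mem_nhdsGE hr₀R))
  have hbR : b ≤ R := (hb (right_mem_Icc.mpr hr₀b.le)).2.2
  have hIoo {s : ℝ} (hs : s ∈ Ioo r₀ b) : s ∈ Ioo 0 R :=
    ⟨hr₀.1.trans_lt hs.1, hs.2.trans_le hbR⟩
  have hIcc {s : ℝ} (hs : s ∈ Icc r₀ b) : s ∈ Icc 0 R :=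
    ⟨hr₀.1.trans hs.1, hs.2.trans hbR⟩
  have hderivWithin {s : ℝ} (hs : s ∈ Ioo 0 R) : derivWithin u (Icc 0 R) s = deriv u s :=
    derivWithin_of_mem_nhds (Icc_mem_nhds hs.1 hs.2)
  -- the flux `r u'(r)`, with a one-sided derivative at `r = 0`
  set g : ℝ → ℝ := fun s => s * derivWithin u (Icc 0 R) s
  have hg_cont : ContinuousOn g (Icc 0 R) :=
    continuousOn_id.mul (hu1.continuousOn_derivWithin (uniqueDiffOn_Icc hR) le_rfl)
  have hg₀ : g r₀ = 0 := by
    rcases hr₀.1.eq_or_lt with h | h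
    · simp [g, ← h]
    · simp [g, hderivWithin ⟨h, hr₀R⟩,
        (hmax.isLocalMax (Icc_mem_nhds h hr₀R)).deriv_eq_zero]
  have hg_deriv {s : ℝ} (hs : s ∈ Ioo 0 R) : HasDerivAt g (s * radialLaplacian u s) s := by
    refine (hasDerivAt_mul_deriv hs.1.ne' (hu2.differentiableAt_deriv isOpen_Ioo hs))
      |>.congr_of_eventuallyEq ?_
    filter_upwards [isOpen_Ioo.mem_nhds hs] with t ht
    simp only [g, hderivWithin ht]
  have hg_mono : StrictMonoOn g (Icc r₀ b) := by
    refine strictMonoOn_of_deriv_pos (convex_Icc r₀ b) (hg_cont.mono fun s => hIcc) ?_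
    intro s hs
    rw [interior_Icc] at hs
    rw [(hg_deriv (hIoo hs)).deriv]
    exact mul_pos (hIoo hs).1 (hΔ s (hIoo hs) (hb (Ioo_subset_Icc_self hs)).1)
  have hu_mono : StrictMonoOn u (Icc r₀ b) := by
    refine strictMonoOn_of_deriv_pos (convex_Icc r₀ b)
      (hu1.continuousOn.mono fun s => hIcc) ?_
    intro s hs
    rw [interior_Icc] at hs
    have hgs : 0 < s * deriv u s := by
      have := hg_mono (left_mem_Icc.mpr hr₀b.le) (Ioo_subset_Icc_self hs) hs.1
      rwa [hg₀, show g s = s * deriv u s from congrArg (s * ·) (hderivWithin (hIoo hs))] at this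
    exact pos_of_mul_pos_right hgs (hIoo hs).1.le
  exact (hmax (hIcc (right_mem_Icc.mpr hr₀b.le))).not_gt
    (hu_mono (left_mem_Icc.mpr hr₀b.le) (right_mem_Icc.mpr hr₀b.le) hr₀b)

lemma IsRadialSteadyState.mul_sub_le_radialLaplacian_sub {R Λ : ℝ} {Φ w : ℝ → ℝ}
    (hΦ : IsRadialSteadyState R Λ Φ) (hΛ : 0 ≤ Λ) (hw : ContDiffOn ℝ 2 w (Ioo 0 R))
    (hweq : ∀ r ∈ Ioo 0 R, -(deriv (deriv w) r) - deriv w r / r + w r = Λ * (w r + 1))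
    {r : ℝ} (hr : r ∈ Ioo 0 R) :
    (1 - Λ) * (w r - Φ r) ≤ radialLaplacian (w - Φ) r := by
  obtain ⟨hΦ2, hΦeq, -, -⟩ := hΦ
  rw [radialLaplacian_sub isOpen_Ioo hw (hΦ2.mono Ioo_subset_Icc_self) hr]
  have hexp : Λ * (Φ r + 1) ≤ Λ * Real.exp (Φ r) :=
    mul_le_mul_of_nonneg_left (Real.add_one_le_exp _) hΛ
  simp only [radialLaplacian]
  linarith [hweq r hr, hΦeq r hr]

theorem minimal_solution_dominates_subsolution_general
    (R : ℝ) (Φ : ℝ → ℝ)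
    (hΦ : IsMinimalRadialSteadyState R (Real.exp 1)⁻¹ Φ)
    (w : ℝ → ℝ)
    (hw1 : ContDiffOn ℝ 1 w (Set.Icc 0 R))
    (hw2 : ContDiffOn ℝ 2 w (Set.Ioo 0 R))
    (hweq : ∀ r ∈ Set.Ioo (0:ℝ) R,
      -(deriv (deriv w) r) - deriv w r / r + w r = (w r + 1) / Real.exp 1)
    (hwR : w R = 0) :
    ∀ r ∈ Set.Icc (0:ℝ) R, w r ≤ Φ r := by
  obtain ⟨hΦ, -⟩ := hΦ
  have he : (Real.exp 1)⁻¹ < 1 := inv_lt_one_of_one_lt₀ (Real.one_lt_exp_iff.mpr one_pos)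
  have hΔ (r : ℝ) (hr : r ∈ Ioo 0 R) (hu : 0 < (w - Φ) r) : 0 < radialLaplacian (w - Φ) r :=
    (mul_pos (sub_pos.mpr he) hu).trans_le <|
      hΦ.mul_sub_le_radialLaplacian_sub (by positivity) hw2
        (fun r hr => by rw [hweq r hr, div_eq_inv_mul]) hr
  intro r hr
  have := nonpos_of_radialLaplacian_pos (hw1.sub (hΦ.1.of_le one_le_two))
    (hw2.sub (hΦ.1.mono Ioo_subset_Icc_self)) hΔ (by simp [hwR, hΦ.2.2.2]) r hr
  simpa [sub_nonpos] using this

theorem minimal_solution_dominates_subsolution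
    (R : ℝ) (hR : 0 < R) (Φ : ℝ → ℝ)
    (hΦ : IsMinimalRadialSteadyState R (Real.exp 1)⁻¹ Φ)
    (w : ℝ → ℝ)
    (hw1 : ContDiffOn ℝ 1 w (Set.Icc 0 R))
    (hw2 : ContDiffOn ℝ 2 w (Set.Ioo 0 R))
    (hweq : ∀ r ∈ Set.Ioo (0:ℝ) R,
      -(deriv (deriv w) r) - deriv w r / r + w r = (w r + 1) / Real.exp 1)
    (hw0 : deriv w 0 = 0) (hwR : w R = 0) :
    ∀ r ∈ Set.Icc (0:ℝ) R, w r ≤ Φ r :=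
  minimal_solution_dominates_subsolution_general R Φ hΦ w hw1 hw2 hweq hwR
end

section
/- Let R > 0 and let w : ℝ → ℝ be continuously differentiable on [0, R], twice continuously differentiable on (0, R), and satisfy −w''(r) − w'(r)/r + w(r) = (w(r) + 1)/e for every r ∈ (0, R), with w'(0) = 0 and w(R) = 0. Then w(r) > 0 for every r ∈ [0, R). -/
/-! Rewriting the equation as `(r w')' = r (w - (w + 1)/e)`, the right-hand side is negative
wherever `w < 1/(e - 1)`. If `w` were `≤ 0` somewhere in `[0, R)`, it would attain its minimum
over `[0, R]` at some `p < R` (recall `w R = 0`), where the flux `r w'(r)` vanishes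
(either `p = 0` or `w'(p) = 0`). Just to the right of `p` we still have `w < 1/(e - 1)`, so the
flux decreases from `0`, `w` strictly decreases there, and `p` is not a minimum. -/

open Set Filter Topology

theorem exists_isMinOn_Ico_of_le {f : ℝ → ℝ} {a b r : ℝ} (hf : ContinuousOn f (Icc a b))
    (hr : r ∈ Ico a b) (hrb : f r ≤ f b) : ∃ p ∈ Ico a b, IsMinOn f (Icc a b) p := by
  obtain ⟨q, hq, hqmin⟩ := isCompact_Icc.exists_isMinOn (nonempty_Icc.mpr (hr.1.trans hr.2.le)) hf
  rcases hq.2.lt_or_eq with hqb | rfl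
  · exact ⟨q, ⟨hq.1, hqb⟩, hqmin⟩
  · exact ⟨r, hr, fun x hx => hrb.trans (hqmin hx)⟩

theorem exists_Icc_forall_lt_of_continuousWithinAt {f : ℝ → ℝ} {p c : ℝ} {s : Set ℝ}
    (hf : ContinuousWithinAt f s p) (hs : s ∈ 𝓝[≥] p) (hpc : f p < c) :
    ∃ b, p < b ∧ Icc p b ⊆ s ∧ ∀ x ∈ Icc p b, f x < c := by
  have hev : ∀ᶠ x in 𝓝[≥] p, x ∈ s ∧ f x < c :=
    (eventually_mem_set.mpr hs).and ((hf.mono_of_mem_nhdsWithin hs).eventually_lt_const hpc)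
  obtain ⟨b, hpb, hsub⟩ := mem_nhdsGE_iff_exists_Icc_subset.mp hev
  exact ⟨b, hpb, fun x hx => (hsub hx).1, fun x hx => (hsub hx).2⟩

theorem hasDerivAt_mul_deriv_s14 {w : ℝ → ℝ} {x : ℝ} (hx : x ≠ 0)
    (h : DifferentiableAt ℝ (deriv w) x) :
    HasDerivAt (fun s => s * deriv w s) (x * (deriv (deriv w) x + deriv w x / x)) x :=
  ((hasDerivAt_id' x).mul h.hasDerivAt).congr_deriv (by field_simp; ring)

theorem strictAntiOn_of_radial_laplacian_neg_s14 {w : ℝ → ℝ} {p b : ℝ} (hp : 0 ≤ p) (hpb : p < b)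
    (hw : ContDiffOn ℝ 1 w (Icc p b)) (hw' : DifferentiableOn ℝ (deriv w) (Ioo p b))
    (hlap : ∀ x ∈ Ioo p b, deriv (deriv w) x + deriv w x / x < 0)
    (hcrit : p = 0 ∨ HasDerivAt w 0 p) : StrictAntiOn w (Icc p b) := by
  set flux := fun s => s * derivWithin w (Icc p b) s
  have hderivWithin : ∀ x ∈ Ioo p b, derivWithin w (Icc p b) x = deriv w x := fun x hx =>
    derivWithin_of_mem_nhds (Icc_mem_nhds hx.1 hx.2)
  have hflux_cont : ContinuousOn flux (Icc p b) :=
    continuousOn_id.mul (hw.continuousOn_derivWithin (uniqueDiffOn_Icc hpb) le_rfl)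
  have hflux_p : flux p = 0 := by
    rcases hcrit with rfl | hp0
    · exact zero_mul _
    · simp only [flux, hp0.hasDerivWithinAt.derivWithin
        ((uniqueDiffOn_Icc hpb) p (left_mem_Icc.mpr hpb.le)), mul_zero]
  have hflux_anti : StrictAntiOn flux (Icc p b) := by
    refine strictAntiOn_of_hasDerivWithinAt_neg (convex_Icc p b) hflux_cont
      (f' := fun x => x * (deriv (deriv w) x + deriv w x / x)) ?_ ?_ <;> rw [interior_Icc]
    · intro x hx
      have hx0 : 0 < x := hp.trans_lt hx.1
      have heq : flux =ᶠ[𝓝 x] fun s => s * deriv w s := by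
        filter_upwards [isOpen_Ioo.mem_nhds hx] with s hs
        simp only [flux, hderivWithin s hs]
      exact ((hasDerivAt_mul_deriv_s14 hx0.ne'
        (hw'.differentiableAt (isOpen_Ioo.mem_nhds hx))).congr_of_eventuallyEq heq).hasDerivWithinAt
    · exact fun x hx => mul_neg_of_pos_of_neg (hp.trans_lt hx.1) (hlap x hx)
  refine strictAntiOn_of_deriv_neg (convex_Icc p b) hw.continuousOn fun x hx => ?_
  rw [interior_Icc] at hx
  have hflux_x : flux x < 0 :=
    hflux_p ▸ hflux_anti (left_mem_Icc.mpr hpb.le) (Ioo_subset_Icc_self hx) hx.1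
  simp only [flux, hderivWithin x hx] at hflux_x
  exact neg_of_mul_neg_right hflux_x (hp.trans_lt hx.1).le

theorem auxiliary_subsolution_positive_general
    (R : ℝ) (w : ℝ → ℝ)
    (hw1 : ContDiffOn ℝ 1 w (Set.Icc 0 R))
    (hw2 : ContDiffOn ℝ 2 w (Set.Ioo 0 R))
    (hweq : ∀ r ∈ Set.Ioo (0:ℝ) R,
      -(deriv (deriv w) r) - deriv w r / r + w r = (w r + 1) / Real.exp 1)
    (hwR : w R = 0) :
    ∀ r ∈ Set.Ico (0:ℝ) R, 0 < w r := by
  intro r hr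
  by_contra! hwr
  have he : 1 < Real.exp 1 := Real.one_lt_exp_iff.mpr one_pos
  obtain ⟨p, hp, hpmin⟩ := exists_isMinOn_Ico_of_le hw1.continuousOn hr (hwR ▸ hwr)
  have hwp : w p < 1 / (Real.exp 1 - 1) :=
    ((hpmin (Ico_subset_Icc_self hr)).trans hwr).trans_lt (by bound)
  obtain ⟨b, hpb, hbR, hwb⟩ := exists_Icc_forall_lt_of_continuousWithinAt
    (hw1.continuousOn p (Ico_subset_Icc_self hp))
    (mem_of_superset (Icc_mem_nhdsGE hp.2) (Icc_subset_Icc_left hp.1)) hwp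
  have hsub : Ioo p b ⊆ Ioo 0 R := fun x hx =>
    ⟨hp.1.trans_lt hx.1, hx.2.trans_le (hbR (right_mem_Icc.mpr hpb.le)).2⟩
  have hlap : ∀ x ∈ Ioo p b, deriv (deriv w) x + deriv w x / x < 0 := by
    intro x hx
    have hwx := (lt_div_iff₀ (sub_pos.mpr he)).mp (hwb x (Ioo_subset_Icc_self hx))
    have hdiv : w x < (w x + 1) / Real.exp 1 := by
      rw [lt_div_iff₀ (by positivity)]; linarith
    linarith [hweq x (hsub hx)]
  have hcrit : p = 0 ∨ HasDerivAt w 0 p := by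
    refine hp.1.eq_or_lt.imp Eq.symm fun hp0 => ?_
    have hmin : IsLocalMin w p := hpmin.isLocalMin (Icc_mem_nhds hp0 hp.2)
    have hdiff : DifferentiableAt ℝ w p :=
      (hw2.differentiableOn two_ne_zero).differentiableAt (Ioo_mem_nhds hp0 hp.2)
    exact hmin.deriv_eq_zero ▸ hdiff.hasDerivAt
  have hanti := strictAntiOn_of_radial_laplacian_neg_s14 hp.1 hpb (hw1.mono hbR)
    (((hw2.deriv_of_isOpen isOpen_Ioo (by norm_num)).differentiableOn one_ne_zero).mono hsub)
    hlap hcrit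
  exact (hanti (left_mem_Icc.mpr hpb.le) (right_mem_Icc.mpr hpb.le) hpb).not_ge
    (hpmin (hbR (right_mem_Icc.mpr hpb.le)))

theorem auxiliary_subsolution_positive
    (R : ℝ) (hR : 0 < R) (w : ℝ → ℝ)
    (hw1 : ContDiffOn ℝ 1 w (Set.Icc 0 R))
    (hw2 : ContDiffOn ℝ 2 w (Set.Ioo 0 R))
    (hweq : ∀ r ∈ Set.Ioo (0:ℝ) R,
      -(deriv (deriv w) r) - deriv w r / r + w r = (w r + 1) / Real.exp 1)
    (hw0 : deriv w 0 = 0) (hwR : w R = 0) :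
    ∀ r ∈ Set.Ico (0:ℝ) R, 0 < w r :=
  auxiliary_subsolution_positive_general R w hw1 hw2 hweq hwR
end

section
/- Let R > 0 and let g : ℝ → ℝ be continuously differentiable on [0, R], twice continuously differentiable on (0, R), and satisfy −g''(r) − g'(r)/r + g(r) = 1 for every r ∈ (0, R), with g'(0) = 0 and g(R) = 0. Then 0 < g(r) < 1 for every r ∈ [0, R). -/
/-!
Both bounds come from the weak maximum principle for the radial operator `-v'' - v'/r + v`:
a function `v` with `-v'' - v'/r + v ≥ 0` on `(0, R)` and `v R ≥ 0` is nonnegative. At a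
negative minimum the flux `r v'` vanishes (at `r = 0` trivially), and as long as `v` stays
negative the flux decreases, so `v` decreases and cannot climb back to `v R ≥ 0`. Comparison
with the barriers `(R² - r²)/(4 + R²)` from below and `1 - cosh r / cosh R` from above gives
`0 < g < 1` on `[0, R)`.
-/

open Set Real

/-- `v'` and `v''` play the role of the derivatives of `v` on `(0, R)`; continuity of the flux
`r v'(r)` at `r = 0` is the regularity at the centre of the disk. -/
structure IsRadialSupersolution (R : ℝ) (v v' v'' : ℝ → ℝ) : Prop where
  continuousOn : ContinuousOn v (Icc 0 R)
  continuousOn_flux : ContinuousOn (fun r => r * v' r) (Ico 0 R)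
  hasDerivAt : ∀ r ∈ Ioo 0 R, HasDerivAt v (v' r) r
  hasDerivAt_deriv : ∀ r ∈ Ioo 0 R, HasDerivAt v' (v'' r) r
  laplacian_le : ∀ r ∈ Ioo 0 R, v'' r + v' r / r ≤ v r

namespace IsRadialSupersolution

variable {R : ℝ} {v v' v'' : ℝ → ℝ}

lemma flux_eq_zero_of_isMinOn (hv : IsRadialSupersolution R v v' v'') {r₁ : ℝ}
    (hr₁ : r₁ ∈ Ico 0 R) (hmin : IsMinOn v (Icc 0 R) r₁) : r₁ * v' r₁ = 0 := by
  rcases hr₁.1.eq_or_lt with h0 | h0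
  · simp [← h0]
  · have hloc : IsLocalMin v r₁ := hmin.isLocalMin (Icc_mem_nhds h0 hr₁.2)
    simp [hloc.hasDerivAt_eq_zero (hv.hasDerivAt r₁ ⟨h0, hr₁.2⟩)]

lemma antitoneOn_of_neg (hv : IsRadialSupersolution R v v' v'') {a b : ℝ} (ha : 0 ≤ a)
    (hb : b ≤ R) (hneg : ∀ r ∈ Ioo a b, v r < 0) (hflux : a * v' a = 0) :
    AntitoneOn v (Icc a b) := by
  have hsub : Ioo a b ⊆ Ioo 0 R := Ioo_subset_Ioo ha hb
  have hflux_anti : AntitoneOn (fun r => r * v' r) (Ico a b) := by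
    refine antitoneOn_of_hasDerivWithinAt_nonpos (convex_Ico a b)
      (hv.continuousOn_flux.mono (Ico_subset_Ico ha hb)) (fun r hr => ?_) (fun r hr => ?_)
      (f' := fun r => v' r + r * v'' r)
    · rw [interior_Ico] at hr ⊢
      simpa using
        ((hasDerivAt_id' r).fun_mul (hv.hasDerivAt_deriv r (hsub hr))).hasDerivWithinAt
    · rw [interior_Ico] at hr
      have hr0 : 0 < r := (hsub hr).1
      have hle := hv.laplacian_le r (hsub hr)
      have hflux_deriv : v' r + r * v'' r = r * (v'' r + v' r / r) := by field_simp; ring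
      nlinarith [hneg r hr]
  refine antitoneOn_of_hasDerivWithinAt_nonpos (convex_Icc a b)
    (hv.continuousOn.mono (Icc_subset_Icc ha hb)) (fun r hr => ?_) (fun r hr => ?_) (f' := v')
  · rw [interior_Icc] at hr ⊢
    exact (hv.hasDerivAt r (hsub hr)).hasDerivWithinAt
  · rw [interior_Icc] at hr
    have hr0 : 0 < r := (hsub hr).1
    have hflux_le : r * v' r ≤ a * v' a :=
      hflux_anti ⟨le_rfl, hr.1.trans hr.2⟩ ⟨hr.1.le, hr.2⟩ hr.1.le
    nlinarith

theorem nonneg (hv : IsRadialSupersolution R v v' v'') (hvR : 0 ≤ v R) :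
    ∀ r ∈ Icc 0 R, 0 ≤ v r := by
  intro r hr
  obtain ⟨r₁, hr₁, hmin⟩ := isCompact_Icc.exists_isMinOn ⟨r, hr⟩ hv.continuousOn
  refine le_trans ?_ (hmin hr)
  by_contra! hneg
  have hr₁R : r₁ < R := hr₁.2.lt_of_ne (by rintro rfl; linarith)
  -- `c` is the first point after `r₁` where `v` is back to `0`
  set S := Icc r₁ R ∩ v ⁻¹' Ici 0
  set c := sInf S
  have hS : IsClosed S :=
    (hv.continuousOn.mono (Icc_subset_Icc hr₁.1 le_rfl)).preimage_isClosed_of_isClosed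
      isClosed_Icc isClosed_Ici
  have hSbdd : BddBelow S := ⟨r₁, fun x hx => hx.1.1⟩
  have hc : c ∈ S := hS.csInf_mem ⟨R, ⟨hr₁R.le, le_rfl⟩, hvR⟩ hSbdd
  have hneg_before : ∀ x ∈ Ioo r₁ c, v x < 0 := fun x hx => by
    by_contra! hx0
    exact (csInf_le hSbdd ⟨⟨hx.1.le, hx.2.le.trans hc.1.2⟩, hx0⟩).not_gt hx.2
  have hanti := hv.antitoneOn_of_neg hr₁.1 hc.1.2 hneg_before
    (hv.flux_eq_zero_of_isMinOn ⟨hr₁.1, hr₁R⟩ hmin)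
  have hvc : 0 ≤ v c := hc.2
  linarith [hanti (left_mem_Icc.2 hc.1.1) (right_mem_Icc.2 hc.1.1) hc.1.1]

end IsRadialSupersolution

lemma ContDiffOn.continuousOn_mul_deriv_Ico {g : ℝ → ℝ} {R : ℝ} (hR : 0 < R)
    (hg : ContDiffOn ℝ 1 g (Icc 0 R)) : ContinuousOn (fun r => r * deriv g r) (Ico 0 R) := by
  refine ((continuousOn_id.mul (hg.continuousOn_derivWithin (uniqueDiffOn_Icc hR) le_rfl)).mono
    Ico_subset_Icc_self).congr fun r hr => ?_
  rcases hr.1.eq_or_lt with h0 | h0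
  · simp [← h0]
  · have hd : DifferentiableAt ℝ g r :=
      (hg.differentiableOn one_ne_zero).differentiableAt (Icc_mem_nhds h0 hr.2)
    simp [hd.derivWithin (uniqueDiffOn_Icc hR r (Ico_subset_Icc_self hr))]

lemma ContDiffOn.hasDerivAt_and_hasDerivAt_deriv {g : ℝ → ℝ} {s : Set ℝ}
    (hg : ContDiffOn ℝ 2 g s) (hs : IsOpen s) {r : ℝ} (hr : r ∈ s) :
    HasDerivAt g (deriv g r) r ∧ HasDerivAt (deriv g) (deriv (deriv g) r) r :=
  ⟨((hg.differentiableOn two_ne_zero).differentiableAt (hs.mem_nhds hr)).hasDerivAt,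
    (((hg.deriv_of_isOpen hs (m := 1) le_rfl).differentiableOn one_ne_zero).differentiableAt
      (hs.mem_nhds hr)).hasDerivAt⟩

section RadialProfile

variable {R : ℝ} {g : ℝ → ℝ}

lemma isRadialSupersolution_sub_quadratic (hR : 0 < R) (hg1 : ContDiffOn ℝ 1 g (Icc 0 R))
    (hg2 : ContDiffOn ℝ 2 g (Ioo 0 R))
    (hsuper : ∀ r ∈ Ioo 0 R, 1 ≤ -deriv (deriv g) r - deriv g r / r + g r) :
    IsRadialSupersolution R (fun r => g r - (R ^ 2 - r ^ 2) / (4 + R ^ 2))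
      (fun r => deriv g r + 2 * r / (4 + R ^ 2))
      (fun r => deriv (deriv g) r + 2 / (4 + R ^ 2)) where
  continuousOn := hg1.continuousOn.sub (by fun_prop)
  continuousOn_flux := by
    simp only [mul_add]
    exact (hg1.continuousOn_mul_deriv_Ico hR).add (by fun_prop)
  hasDerivAt r hr :=
    ((hg2.hasDerivAt_and_hasDerivAt_deriv isOpen_Ioo hr).1.sub
      (((hasDerivAt_pow 2 r).const_sub (R ^ 2)).div_const (4 + R ^ 2))).congr_deriv
        (by simp only [Nat.cast_ofNat, Nat.add_one_sub_one, pow_one]; ring)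
  hasDerivAt_deriv r hr :=
    ((hg2.hasDerivAt_and_hasDerivAt_deriv isOpen_Ioo hr).2.add
      (((hasDerivAt_id' r).const_mul 2).div_const (4 + R ^ 2))).congr_deriv (by ring)
  laplacian_le r hr := by
    have hr0 : 0 < r := hr.1
    have hsr := hsuper r hr
    have hR4 : 0 < 4 + R ^ 2 := by positivity
    have : (R ^ 2 - r ^ 2) / (4 + R ^ 2) + 4 / (4 + R ^ 2) ≤ 1 := by
      rw [← add_div, div_le_one hR4]; nlinarith
    calc deriv (deriv g) r + 2 / (4 + R ^ 2) + (deriv g r + 2 * r / (4 + R ^ 2)) / r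
        = deriv (deriv g) r + deriv g r / r + 4 / (4 + R ^ 2) := by field_simp; ring
      _ ≤ g r - (R ^ 2 - r ^ 2) / (4 + R ^ 2) := by linarith

lemma isRadialSupersolution_one_sub_sub_cosh (hR : 0 < R) (hg1 : ContDiffOn ℝ 1 g (Icc 0 R))
    (hg2 : ContDiffOn ℝ 2 g (Ioo 0 R))
    (hsubsol : ∀ r ∈ Ioo 0 R, -deriv (deriv g) r - deriv g r / r + g r ≤ 1) :
    IsRadialSupersolution R (fun r => 1 - g r - cosh r / cosh R)
      (fun r => -deriv g r - sinh r / cosh R) (fun r => -deriv (deriv g) r - cosh r / cosh R) where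
  continuousOn := (continuousOn_const.sub hg1.continuousOn).sub (by fun_prop)
  continuousOn_flux := by
    simp only [mul_sub, mul_neg]
    exact (hg1.continuousOn_mul_deriv_Ico hR).neg.sub (by fun_prop)
  hasDerivAt r hr :=
    ((hg2.hasDerivAt_and_hasDerivAt_deriv isOpen_Ioo hr).1.const_sub 1).sub
      ((hasDerivAt_cosh r).div_const (cosh R))
  hasDerivAt_deriv r hr :=
    (hg2.hasDerivAt_and_hasDerivAt_deriv isOpen_Ioo hr).2.neg.sub
      ((hasDerivAt_sinh r).div_const (cosh R))
  laplacian_le r hr := by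
    have hr0 : 0 < r := hr.1
    have hsinh : 0 ≤ sinh r / cosh R / r := by
      have := sinh_nonneg_iff.2 hr0.le
      positivity
    calc -deriv (deriv g) r - cosh r / cosh R + (-deriv g r - sinh r / cosh R) / r
        = -deriv (deriv g) r - deriv g r / r - cosh r / cosh R - sinh r / cosh R / r := by ring
      _ ≤ 1 - g r - cosh r / cosh R := by linarith [hsubsol r hr]

end RadialProfile

theorem leading_order_profile_bounds_general
    (R : ℝ) (hR : 0 < R) (g : ℝ → ℝ)
    (hg1 : ContDiffOn ℝ 1 g (Set.Icc 0 R))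
    (hg2 : ContDiffOn ℝ 2 g (Set.Ioo 0 R))
    (hgeq : ∀ r ∈ Set.Ioo (0:ℝ) R,
      -(deriv (deriv g) r) - deriv g r / r + g r = 1)
    (hgR : g R = 0) :
    ∀ r ∈ Set.Ico (0:ℝ) R, 0 < g r ∧ g r < 1 := by
  intro r hr
  have hlower := (isRadialSupersolution_sub_quadratic hR hg1 hg2
    fun s hs => (hgeq s hs).ge).nonneg (by simp [hgR]) r (Ico_subset_Icc_self hr)
  have hupper := (isRadialSupersolution_one_sub_sub_cosh hR hg1 hg2
    fun s hs => (hgeq s hs).le).nonneg (by simp [hgR, (cosh_pos R).ne']) r (Ico_subset_Icc_self hr)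
  have hbump : 0 < (R ^ 2 - r ^ 2) / (4 + R ^ 2) := by
    have : r ^ 2 < R ^ 2 := by nlinarith [hr.1, hr.2]
    apply div_pos <;> nlinarith
  have hcosh : 0 < cosh r / cosh R := div_pos (cosh_pos r) (cosh_pos R)
  exact ⟨by linarith, by linarith⟩

theorem leading_order_profile_bounds
    (R : ℝ) (hR : 0 < R) (g : ℝ → ℝ)
    (hg1 : ContDiffOn ℝ 1 g (Set.Icc 0 R))
    (hg2 : ContDiffOn ℝ 2 g (Set.Ioo 0 R))
    (hgeq : ∀ r ∈ Set.Ioo (0:ℝ) R,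
      -(deriv (deriv g) r) - deriv g r / r + g r = 1)
    (hg0 : deriv g 0 = 0) (hgR : g R = 0) :
    ∀ r ∈ Set.Ico (0:ℝ) R, 0 < g r ∧ g r < 1 :=
  leading_order_profile_bounds_general R hR g hg1 hg2 hgeq hgR
end

section
/- Let S : ℝ² → ℝ be twice continuously differentiable, let V ∈ ℝ² and m₀ ∈ ℝ, and define m : ℝ² → ℝ by m(x) = m₀·exp(S(x) − ⟨V, x⟩). Then ∇m(x) = m(x)·(∇S(x) − V) for every x ∈ ℝ², and consequently −Δm(x) + div((∇S − V)·m)(x) = 0 for every x ∈ ℝ². -/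
/-- Partial derivative of `f : ℝ × ℝ → ℝ` in the first coordinate direction. -/
noncomputable def pd1 (f : ℝ × ℝ → ℝ) : ℝ × ℝ → ℝ := fun p => fderiv ℝ f p (1, 0)

/-- Partial derivative of `f : ℝ × ℝ → ℝ` in the second coordinate direction. -/
noncomputable def pd2 (f : ℝ × ℝ → ℝ) : ℝ × ℝ → ℝ := fun p => fderiv ℝ f p (0, 1)

/-!
Since `m = m₀ · exp (S - ⟨V, ·⟩)`, the chain rule gives `∇m = m (∇S - V)`. Hence the flux
`∇m - (∇S - V) m` vanishes identically, and the stationary equation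
`-Δm + div ((∇S - V) m) = div ((∇S - V) m - ∇m) = 0` holds without differentiating a second time.
-/

open ContinuousLinearMap

section ExpProfile

variable {E : Type*} [NormedAddCommGroup E] [NormedSpace ℝ E]

theorem hasFDerivAt_const_mul_exp_sub_clm {f : E → ℝ} {f' : E →L[ℝ] ℝ} {p : E}
    (hf : HasFDerivAt f f' p) (L : E →L[ℝ] ℝ) (c : ℝ) :
    HasFDerivAt (fun x => c * Real.exp (f x - L x))
      ((c * Real.exp (f p - L p)) • (f' - L)) p := by
  have := ((hf.sub L.hasFDerivAt).exp).const_mul c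
  rwa [smul_smul] at this

theorem fderiv_const_mul_exp_sub_clm_apply {f : E → ℝ} {p : E} (hf : DifferentiableAt ℝ f p)
    (L : E →L[ℝ] ℝ) (c : ℝ) (v : E) :
    fderiv ℝ (fun x => c * Real.exp (f x - L x)) p v
      = c * Real.exp (f p - L p) * (fderiv ℝ f p v - L v) := by
  rw [(hasFDerivAt_const_mul_exp_sub_clm hf.hasFDerivAt L c).fderiv]
  rfl

end ExpProfile

noncomputable def dotCLM (V : ℝ × ℝ) : ℝ × ℝ →L[ℝ] ℝ := V.1 • fst ℝ ℝ ℝ + V.2 • snd ℝ ℝ ℝ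

@[simp]
theorem dotCLM_apply (V p : ℝ × ℝ) : dotCLM V p = V.1 * p.1 + V.2 * p.2 := rfl

theorem neg_laplacian_add_div_eq_zero_of_pd_eq_mul {m F₁ F₂ : ℝ × ℝ → ℝ}
    (h₁ : pd1 m = fun q => F₁ q * m q) (h₂ : pd2 m = fun q => F₂ q * m q) (p : ℝ × ℝ) :
    -(pd1 (pd1 m) p + pd2 (pd2 m) p)
      + (pd1 (fun q => F₁ q * m q) p + pd2 (fun q => F₂ q * m q) p) = 0 := by
  rw [h₁, h₂]
  ring

theorem myosin_elimination
    (S : ℝ × ℝ → ℝ) (hS : ContDiff ℝ 2 S) (V : ℝ × ℝ) (m₀ : ℝ)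
    (m : ℝ × ℝ → ℝ)
    (hm : ∀ p : ℝ × ℝ, m p = m₀ * Real.exp (S p - (V.1 * p.1 + V.2 * p.2))) :
    (∀ p : ℝ × ℝ,
      pd1 m p = m p * (pd1 S p - V.1) ∧ pd2 m p = m p * (pd2 S p - V.2)) ∧
    (∀ p : ℝ × ℝ,
      -(pd1 (pd1 m) p + pd2 (pd2 m) p)
        + (pd1 (fun q => (pd1 S q - V.1) * m q) p
          + pd2 (fun q => (pd2 S q - V.2) * m q) p) = 0) := by
  obtain rfl : m = fun p => m₀ * Real.exp (S p - dotCLM V p) := funext hm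
  have grad (p : ℝ × ℝ) :
      pd1 (fun p => m₀ * Real.exp (S p - dotCLM V p)) p
          = m₀ * Real.exp (S p - dotCLM V p) * (pd1 S p - V.1) ∧
        pd2 (fun p => m₀ * Real.exp (S p - dotCLM V p)) p
          = m₀ * Real.exp (S p - dotCLM V p) * (pd2 S p - V.2) := by
    have hSp := hS.differentiable (by norm_num) p
    simp only [pd1, pd2, fderiv_const_mul_exp_sub_clm_apply hSp]
    simp
  refine ⟨grad, neg_laplacian_add_div_eq_zero_of_pd_eq_mul ?_ ?_⟩ <;>
    funext q <;> simp only [grad q, mul_comm]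
end
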